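/- arXiv:math/0511084 — 8 statements merged into one kernel-verified Lean document; each statement's English description precedes it below -/
import Mathlib

section
/- Let d ≥ 3 and k ≥ 1, and let S₁, …, S_k be a coindependent family of affine codimension-2 subspaces of F₂^d with nonempty common intersection U = ⋂ S_i. If H is an affine hyperplane of F₂^d that neither contains U nor is disjoint from U, then the symmetric difference H + S₁ + ⋯ + S_k has cardinality exactly 2^{d-1}. -/
open scoped Classical

/-! A point of `U ∩ H` and a point of `U \ H` differ by a vector `v` that lies in every
direction `W i` but not in the direction of `H`. Translation by `v` therefore fixes each `S i`,
hence their Boolean sum, while it swaps `H` with its complement (over `𝔽₂` a hyperplane has just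
two cosets). So `x ↦ x + v` maps `H + S₁ + ⋯ + S_k` onto its complement, which forces it to
contain exactly half of the `2^d` points. -/

theorem Submodule.add_mem_of_notMem_of_finrank_quotient_le_one {V : Type*} [AddCommGroup V]
    [Module (ZMod 2) V] [Module.Finite (ZMod 2) V] {W : Submodule (ZMod 2) V}
    (hW : Module.finrank (ZMod 2) (V ⧸ W) ≤ 1) {a b : V} (ha : a ∉ W) (hb : b ∉ W) :
    a + b ∈ W := by
  obtain ⟨w, hw⟩ := finrank_le_one_iff.mp hW
  have mkQ_eq : ∀ x ∉ W, W.mkQ x = w := fun x hx => by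
    obtain ⟨c, hc⟩ := hw (W.mkQ x)
    obtain rfl | rfl : c = 0 ∨ c = 1 := by clear hc; revert c; decide
    · exact absurd ((Submodule.Quotient.mk_eq_zero W).mp (by simpa using hc.symm)) hx
    · simpa using hc.symm
  rw [← ZModModule.sub_eq_add, ← Submodule.Quotient.eq]
  exact (mkQ_eq a ha).trans (mkQ_eq b hb).symm

theorem Set.two_mul_ncard_of_map_mem_iff_notMem {α : Type*} [Finite α] (e : α ≃ α) {A : Set α}
    (h : ∀ x, e x ∈ A ↔ x ∉ A) : 2 * A.ncard = Nat.card α := by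
  have preimage_eq : e ⁻¹' A = Aᶜ := Set.ext h
  have ncard_compl : Aᶜ.ncard = A.ncard := by
    rw [← preimage_eq, Set.ncard_preimage_of_injective_subset_range e.injective (by simp)]
  rw [two_mul, ← Set.ncard_add_ncard_compl A, ncard_compl]

theorem two_mul_ncard_symmDiff_of_add_mem_iff {V : Type*} [AddCommGroup V] [Module (ZMod 2) V]
    [Finite V] {W : Submodule (ZMod 2) V} (hW : Module.finrank (ZMod 2) (V ⧸ W) ≤ 1) (q : V)
    {v : V} (hv : v ∉ W) {S : Set V} (hS : ∀ x, x + v ∈ S ↔ x ∈ S) :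
    2 * (symmDiff {x | x - q ∈ W} S).ncard = Nat.card V := by
  refine Set.two_mul_ncard_of_map_mem_iff_notMem (Equiv.addRight v) fun x => ?_
  have swap_coset : x + v - q ∈ W ↔ x - q ∉ W := by
    rw [add_sub_right_comm]
    by_cases hx : x - q ∈ W
    · rw [W.add_mem_iff_right hx]
      simp [hx, hv]
    · simpa [hx] using W.add_mem_of_notMem_of_finrank_quotient_le_one hW hx hv
  simp only [Set.mem_symmDiff, Equiv.coe_addRight, Set.mem_ofPred_eq, swap_coset, hS]
  tauto

theorem cleansing_gives_midset_general
    (d k : ℕ)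
    (p : Fin d → ZMod 2)
    (W : Fin k → Submodule (ZMod 2) (Fin d → ZMod 2))
    (q : Fin d → ZMod 2)
    (WH : Submodule (ZMod 2) (Fin d → ZMod 2))
    (hWH : Module.finrank (ZMod 2) WH = d - 1)
    (H : Set (Fin d → ZMod 2)) (hH : H = {x | x - q ∈ WH})
    (U : Set (Fin d → ZMod 2)) (hU : U = ⋂ i, {x | x - p ∈ W i})
    (hnotsub : ¬ U ⊆ H)
    (hmeet : (U ∩ H).Nonempty) :
    Set.ncard (symmDiff H {x : Fin d → ZMod 2 |
        Odd (Finset.univ.filter (fun i : Fin k => x - p ∈ W i)).card})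
      = 2 ^ (d - 1) := by
  subst hH hU
  obtain ⟨u, huU, huH⟩ := hmeet
  obtain ⟨u', hu'U, hu'H⟩ := Set.not_subset.mp hnotsub
  simp only [Set.mem_iInter, Set.mem_ofPred_eq] at huU huH hu'U hu'H
  have mem_W : ∀ i, u' - u ∈ W i := fun i => by
    simpa using sub_mem (hu'U i) (huU i)
  have notMem_WH : u' - u ∉ WH := fun h => hu'H (by simpa using add_mem h huH)
  have codim_WH : Module.finrank (ZMod 2) ((Fin d → ZMod 2) ⧸ WH) ≤ 1 := by
    have := WH.finrank_quotient_add_finrank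
    rw [hWH, Module.finrank_fin_fun] at this
    omega
  have translate_mem_W : ∀ x i, x + (u' - u) - p ∈ W i ↔ x - p ∈ W i := fun x i => by
    rw [add_sub_right_comm]
    exact (W i).add_mem_iff_left (mem_W i)
  have half := two_mul_ncard_symmDiff_of_add_mem_iff codim_WH q notMem_WH
    (S := {x | Odd (Finset.univ.filter fun i => x - p ∈ W i).card}) fun x => by
    simp only [Set.mem_ofPred_eq, translate_mem_W]
  rw [Nat.card_eq_fintype_card, Fintype.card_fun, ZMod.card, Fintype.card_fin] at half
  cases d with
  | zero => omega
  | succ n => rw [pow_succ] at half; simp only [Nat.add_sub_cancel]; omega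

/-- Let `S₁, …, S_k` be a cubi sequence in `F₂^d` (coindependent affine
codimension-2 subspaces through a common point `p`) with intersection `U`,
and let `H` be an affine hyperplane which neither contains `U` nor is
disjoint from `U`.  Then the Boolean sum `H + S₁ + ⋯ + S_k` has cardinality
exactly `2^(d-1)`. -/
theorem cleansing_gives_midset
    (d k : ℕ) (hd : 3 ≤ d) (hk : 1 ≤ k)
    (p : Fin d → ZMod 2)
    (W : Fin k → Submodule (ZMod 2) (Fin d → ZMod 2))
    (hcodim : ∀ i, Module.finrank (ZMod 2) (W i) = d - 2)
    (hcoind : iSupIndep (fun i => (W i).dualAnnihilator))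
    (q : Fin d → ZMod 2)
    (WH : Submodule (ZMod 2) (Fin d → ZMod 2))
    (hWH : Module.finrank (ZMod 2) WH = d - 1)
    (H : Set (Fin d → ZMod 2)) (hH : H = {x | x - q ∈ WH})
    (U : Set (Fin d → ZMod 2)) (hU : U = ⋂ i, {x | x - p ∈ W i})
    (hnotsub : ¬ U ⊆ H)
    (hmeet : (U ∩ H).Nonempty) :
    Set.ncard (symmDiff H {x : Fin d → ZMod 2 |
        Odd (Finset.univ.filter (fun i : Fin k => x - p ∈ W i)).card})
      = 2 ^ (d - 1) :=
  cleansing_gives_midset_general d k p W q WH hWH H hH U hU hnotsub hmeet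
end

section
/- Let S be a subset of F₂^d that is a dirty nonaffine midset (|S| = 2^{d-1}, S is not an affine hyperplane), and let H₁, H₂ be cleansing hyperplanes for S (affine hyperplanes such that S + H_i is not a midset). If H₁ ∩ S = H₂ ∩ S, then H₁ = H₂. -/
/-- `S` is an affine subspace of `F₂^d` of dimension `m`. -/
def IsAffineSubspaceOfDim (d m : ℕ) (S : Set (Fin d → ZMod 2)) : Prop :=
  ∃ (p : Fin d → ZMod 2) (W : Submodule (ZMod 2) (Fin d → ZMod 2)),
    Module.finrank (ZMod 2) W = m ∧ S = {x | x - p ∈ W}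

/-!
Write `Hᵢ = {x | fᵢ x = cᵢ}` for linear functionals `fᵢ`. Over `F₂`, the condition
`H₁ ∩ S = H₂ ∩ S` says that every `x ∈ S` satisfies `(f₁ - f₂) x = c₁ - c₂`. If `f₁ = f₂`,
a common point of `H₁` and `H₂` forces `c₁ = c₂`, so `H₁ = H₂`. Otherwise that equation
defines an affine hyperplane, which has `2^(d-1)` points and contains `S`, hence equals `S`.
-/

open Module

theorem Submodule.exists_dual_ker_eq_of_finrank_add_one_eq {K V : Type*} [Field K]
    [AddCommGroup V] [Module K V] [FiniteDimensional K V] (W : Submodule K V)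
    (hW : finrank K W + 1 = finrank K V) :
    ∃ f : Dual K V, LinearMap.ker f = W := by
  have hQ : finrank K (V ⧸ W) = 1 := by
    have := W.finrank_quotient_add_finrank
    omega
  refine ⟨(basisUnique (Fin 1) hQ).coord 0 ∘ₗ W.mkQ, ?_⟩
  ext x
  simp only [LinearMap.mem_ker, LinearMap.comp_apply, Basis.coord_apply,
    basisUnique_repr_eq_zero_iff, Submodule.mkQ_apply, Submodule.Quotient.mk_eq_zero]

theorem zmod_two_sub_eq_sub_of_iff (a b c e : ZMod 2) (h : a = b ↔ c = e) : a - c = b - e := by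
  revert a b c e
  decide

namespace IsAffineSubspaceOfDim

variable {d : ℕ}

theorem ncard_eq {m : ℕ} {S : Set (Fin d → ZMod 2)} (hS : IsAffineSubspaceOfDim d m S) :
    S.ncard = 2 ^ m := by
  obtain ⟨p, W, rfl, rfl⟩ := hS
  rw [← Nat.card_coe_set_eq,
    Nat.card_congr ((Equiv.subRight p).subtypeEquiv (p := (· ∈ {x | x - p ∈ W})) (q := (· ∈ W))
      fun _ => Iff.rfl),
    natCard_eq_pow_finrank (K := ZMod 2), Nat.card_zmod]

theorem exists_eq_setOf_apply_eq (hd : 1 ≤ d) {H : Set (Fin d → ZMod 2)}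
    (hH : IsAffineSubspaceOfDim d (d - 1) H) :
    ∃ (f : Dual (ZMod 2) (Fin d → ZMod 2)) (c : ZMod 2), H = {x | f x = c} := by
  obtain ⟨p, W, hW, rfl⟩ := hH
  obtain ⟨f, rfl⟩ := W.exists_dual_ker_eq_of_finrank_add_one_eq (by rw [hW, finrank_fin_fun]; omega)
  exact ⟨f, f p, by simp [sub_eq_zero]⟩

theorem setOf_apply_eq {f : Dual (ZMod 2) (Fin d → ZMod 2)} (hf : f ≠ 0) (c : ZMod 2) :
    IsAffineSubspaceOfDim d (d - 1) {x | f x = c} := by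
  obtain ⟨p, rfl⟩ := LinearMap.surjective hf c
  have hker := Dual.finrank_ker_add_one_of_ne_zero hf
  rw [finrank_fin_fun] at hker
  exact ⟨p, LinearMap.ker f, by omega, by simp [sub_eq_zero]⟩

end IsAffineSubspaceOfDim

/-- Let `S` be a nonaffine midset of `F₂^d` (a set of size `2^(d-1)` which is
not an affine hyperplane).  If `H₁, H₂` are affine hyperplanes with
`H₁ ∩ S = H₂ ∩ S` (and nonempty intersection with each other), then
`H₁ = H₂`; equivalently, distinctness leads to a contradiction. -/
theorem cleansing_hyperplane_determined_by_intersection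
    (d : ℕ) (hd : 3 ≤ d)
    (S : Set (Fin d → ZMod 2))
    (hmid : S.ncard = 2 ^ (d - 1))
    (hnonaff : ¬ IsAffineSubspaceOfDim d (d - 1) S)
    (H₁ H₂ : Set (Fin d → ZMod 2))
    (h₁ : IsAffineSubspaceOfDim d (d - 1) H₁)
    (h₂ : IsAffineSubspaceOfDim d (d - 1) H₂)
    (hcap : H₁ ∩ S = H₂ ∩ S)
    (hmeet : (H₁ ∩ H₂).Nonempty)
    (hne : H₁ ≠ H₂) :
    False := by
  obtain ⟨f₁, c₁, rfl⟩ := h₁.exists_eq_setOf_apply_eq (by omega)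
  obtain ⟨f₂, c₂, rfl⟩ := h₂.exists_eq_setOf_apply_eq (by omega)
  have hf : f₁ - f₂ ≠ 0 := by
    rw [sub_ne_zero]
    rintro rfl
    obtain ⟨x, hx₁, hx₂⟩ := hmeet
    exact hne (by rw [← hx₁.out, ← hx₂.out])
  have hST : S ⊆ {x | (f₁ - f₂) x = c₁ - c₂} := fun x hx => by
    have hiff := Set.ext_iff.mp hcap x
    simp only [Set.mem_inter_iff, Set.mem_ofPred_eq, hx, and_true] at hiff
    exact zmod_two_sub_eq_sub_of_iff _ _ _ _ hiff
  have hT := IsAffineSubspaceOfDim.setOf_apply_eq hf (c₁ - c₂)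
  exact hnonaff (Set.eq_of_subset_of_ncard_le hST (by rw [hT.ncard_eq, hmid]) ▸ hT)
end

section
/- A faithful representation of the direct product of k copies of the symmetric group S₃ over a field of characteristic 2 has dimension at least 2k. -/
open Module LinearMap

namespace S3RepAux

variable {F : Type*} [Field F] {N : Type*} [AddCommGroup N] [Module F N]

lemma add_self_zero [CharP F 2] (x : N) : x + x = 0 := by
  have h2 : (2 : F) = 0 := by
    have := CharP.cast_eq_zero F 2
    exact_mod_cast this
  rw [← two_smul F x, h2, zero_smul]

lemma eq_of_add_eq_zero [CharP F 2] {x y : N} (h : x + y = 0) : x = y := by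
  rw [eq_neg_of_add_eq_zero_left h]
  exact neg_eq_of_add_eq_zero_left (add_self_zero (F := F) y)

lemma end_add_self [CharP F 2] (B : Module.End F N) : B + B = 0 := by
  ext x
  simpa using add_self_zero (F := F) (B x)

lemma end_two [CharP F 2] : (2 : Module.End F N) = 0 := by
  rw [← one_add_one_eq_two]
  exact end_add_self 1

lemma ker_inf_eq_bot {f g : Module.End F N} (hsum : f + g = 1) :
    ker f ⊓ ker g = ⊥ := by
  rw [eq_bot_iff]
  rintro x ⟨hf, hg⟩
  have h := congrArg (fun φ : Module.End F N => φ x) hsum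
  simp only [LinearMap.add_apply, Module.End.one_apply] at h
  rw [mem_ker.mp hf, mem_ker.mp hg, add_zero] at h
  simpa using h.symm

lemma ker_sup_eq_top {f g : Module.End F N} (hsum : f + g = 1)
    (hfg : f * g = 0) (hgf : g * f = 0) :
    ker f ⊔ ker g = ⊤ := by
  rw [eq_top_iff]
  intro x _
  have hgx : g x ∈ ker f := by
    rw [mem_ker, ← Module.End.mul_apply, hfg]; rfl
  have hfx : f x ∈ ker g := by
    rw [mem_ker, ← Module.End.mul_apply, hgf]; rfl
  have hx : g x + f x = x := by
    have h := congrArg (fun φ : Module.End F N => φ x) hsum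
    simp only [LinearMap.add_apply, Module.End.one_apply] at h
    rw [add_comm] at h
    exact h
  rw [← hx]
  exact Submodule.add_mem_sup hgx hfx

lemma finrank_split [FiniteDimensional F N] {f g : Module.End F N} (hsum : f + g = 1)
    (hfg : f * g = 0) (hgf : g * f = 0) :
    finrank F (ker f) + finrank F (ker g) = finrank F N := by
  have h := Submodule.finrank_sup_add_finrank_inf_eq (ker f) (ker g)
  rw [ker_sup_eq_top hsum hfg hgf, ker_inf_eq_bot hsum] at h
  simpa [finrank_top] using h.symm

lemma ker_mapsTo {B f : Module.End F N} (h : Commute B f) :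
    ∀ x ∈ ker f, B x ∈ ker f := by
  intro x hx
  rw [mem_ker, ← Module.End.mul_apply, ← h.eq, Module.End.mul_apply, mem_ker.mp hx, map_zero]

lemma restrict_eq_of_eq {f g : Module.End F N} {p : Submodule F N} (h : f = g)
    (hf : ∀ x ∈ p, f x ∈ p) (hg : ∀ x ∈ p, g x ∈ p) : f.restrict hf = g.restrict hg := by
  subst h; rfl

lemma restrict_mul' {f g : Module.End F N} {p : Submodule F N}
    (hf : ∀ x ∈ p, f x ∈ p) (hg : ∀ x ∈ p, g x ∈ p) :
    f.restrict hf * g.restrict hg = (f * g).restrict (fun x hx => hf _ (hg x hx)) := rfl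

lemma restrict_one' {p : Submodule F N} (h : ∀ x ∈ p, (1 : Module.End F N) x ∈ p) :
    (1 : Module.End F N).restrict h = 1 := rfl

lemma restrict_eq_one_iff {f : Module.End F N} {p : Submodule F N}
    (hf : ∀ x ∈ p, f x ∈ p) :
    f.restrict hf = 1 ↔ ∀ x ∈ p, f x = x := by
  constructor
  · intro H x hx
    have := congrArg (fun φ : Module.End F ↥p => ((φ ⟨x, hx⟩ : ↥p) : N)) H
    simpa [LinearMap.restrict_apply] using this
  · intro H
    ext ⟨x, hx⟩
    simpa [LinearMap.restrict_apply] using H x hx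

lemma smul_one_commute (c : F) (B : Module.End F N) :
    Commute B (c • (1 : Module.End F N)) := by
  show B * (c • 1) = (c • 1) * B
  rw [mul_smul_comm, smul_mul_assoc, mul_one, one_mul]

end S3RepAux

open S3RepAux

theorem S3Rep.mainLemma {F : Type*} [Field F] [CharP F 2] {c : F} (hc : c ^ 2 + c + 1 = 0)
    {ι : Type*} [DecidableEq ι] :
    ∀ (d : ℕ) {N : Type*} [AddCommGroup N] [Module F N] [FiniteDimensional F N]
      (σ τ : ι → Module.End F N) (s : Finset ι),
      Module.finrank F N ≤ d →
      (∀ i ∈ s, σ i ^ 3 = 1) →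
      (∀ i ∈ s, ∀ j ∈ s, Commute (σ i) (σ j)) →
      (∀ i ∈ s, ∀ j ∈ s, i ≠ j → Commute (τ i) (σ j)) →
      (∀ i ∈ s, τ i * σ i = σ i ^ 2 * τ i) →
      (∀ i ∈ s, Function.Injective (τ i)) →
      (∀ i ∈ s, σ i ≠ 1) →
      2 * s.card ≤ Module.finrank F N := by
  intro d
  induction d with
  | zero =>
    intro N _ _ _ σ τ s hd h3 hσσ hτσ hconj hτinj hne
    rcases s.eq_empty_or_nonempty with rfl | ⟨i, hi⟩
    · simp
    · exfalso
      haveI : Subsingleton N := Module.finrank_zero_iff.mp (Nat.le_zero.mp hd)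
      exact hne i hi (LinearMap.ext fun x => Subsingleton.elim _ _)
  | succ d IH =>
    intro N _ _ _ σ τ s hd h3 hσσ hτσ hconj hτinj hne
    classical
    rcases s.eq_empty_or_nonempty with rfl | ⟨i, hi⟩
    · simp
    have h2E : (2 : Module.End F N) = 0 := S3RepAux.end_two
    have hA3 : σ i ^ 3 = 1 := h3 i hi
    have hA4 : σ i ^ 4 = σ i := by
      rw [show (4 : ℕ) = 3 + 1 by norm_num, pow_succ, hA3, one_mul]
    have hAA : σ i + σ i = 0 := S3RepAux.end_add_self (σ i)
    set f₀ : Module.End F N := σ i ^ 2 + σ i with hf₀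
    set g₀ : Module.End F N := σ i ^ 2 + σ i + 1 with hg₀
    have hg₀' : g₀ = f₀ + 1 := by rw [hg₀, hf₀]
    have hsum : f₀ + g₀ = 1 := by
      have h : f₀ + g₀ = 2 * σ i ^ 2 + 2 * σ i + 1 := by rw [hf₀, hg₀]; noncomm_ring
      rw [h, h2E]
      simp
    have hfg : f₀ * g₀ = 0 := by
      have h : f₀ * g₀ = σ i ^ 4 + 2 * σ i ^ 3 + 2 * σ i ^ 2 + σ i := by
        rw [hf₀, hg₀]; noncomm_ring
      rw [h, h2E]
      simp only [zero_mul, add_zero, zero_add]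
      rw [hA4]
      exact hAA
    have hgf : g₀ * f₀ = 0 := by
      have h : g₀ * f₀ = σ i ^ 4 + 2 * σ i ^ 3 + 2 * σ i ^ 2 + σ i := by
        rw [hf₀, hg₀]; noncomm_ring
      rw [h, h2E]
      simp only [zero_mul, add_zero, zero_add]
      rw [hA4]
      exact hAA
    set N₀ : Submodule F N := ker f₀ with hN₀
    set N₁ : Submodule F N := ker g₀ with hN₁
    have hrkN : finrank F ↥N₀ + finrank F ↥N₁ = finrank F N :=
      S3RepAux.finrank_split hsum hfg hgf
    have hsupN : N₀ ⊔ N₁ = ⊤ := S3RepAux.ker_sup_eq_top hsum hfg hgf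
    have hcσf : ∀ j ∈ s, Commute (σ j) f₀ := by
      intro j hj
      have h := hσσ j hj i hi
      rw [hf₀]
      exact (h.pow_right 2).add_right h
    have hτiA2 : τ i * σ i ^ 2 = σ i * τ i := by
      have h1 : τ i * σ i = σ i ^ 2 * τ i := hconj i hi
      calc τ i * σ i ^ 2 = τ i * σ i * σ i := by rw [mul_assoc, ← sq]
        _ = σ i ^ 2 * τ i * σ i := by rw [h1]
        _ = σ i ^ 2 * (σ i ^ 2 * τ i) := by rw [mul_assoc, h1]
        _ = σ i ^ 2 * σ i ^ 2 * τ i := by rw [mul_assoc]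
        _ = σ i ^ 4 * τ i := by rw [← pow_add]
        _ = σ i * τ i := by rw [hA4]
    have hcτf : ∀ j ∈ s, Commute (τ j) f₀ := by
      intro j hj
      by_cases hji : j = i
      · subst hji
        show τ j * f₀ = f₀ * τ j
        rw [hf₀, mul_add, add_mul, hτiA2, hconj j hj]
        exact add_comm _ _
      · have h := hτσ j hj i hi hji
        rw [hf₀]
        exact (h.pow_right 2).add_right h
    have hcσg : ∀ j ∈ s, Commute (σ j) g₀ := fun j hj => by
      rw [hg₀']; exact (hcσf j hj).add_right (Commute.one_right _)
    have hcτg : ∀ j ∈ s, Commute (τ j) g₀ := fun j hj => by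
      rw [hg₀']; exact (hcτf j hj).add_right (Commute.one_right _)
    have hmσ0 : ∀ j ∈ s, ∀ x ∈ N₀, σ j x ∈ N₀ := fun j hj => S3RepAux.ker_mapsTo (hcσf j hj)
    have hmτ0 : ∀ j ∈ s, ∀ x ∈ N₀, τ j x ∈ N₀ := fun j hj => S3RepAux.ker_mapsTo (hcτf j hj)
    have hmσ1 : ∀ j ∈ s, ∀ x ∈ N₁, σ j x ∈ N₁ := fun j hj => S3RepAux.ker_mapsTo (hcσg j hj)
    have hmτ1 : ∀ j ∈ s, ∀ x ∈ N₁, τ j x ∈ N₁ := fun j hj => S3RepAux.ker_mapsTo (hcτg j hj)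
    have hN₁ne : N₁ ≠ ⊥ := by
      intro hbot
      apply hne i hi
      have hN0top : N₀ = ⊤ := by rw [← hsupN, hbot, sup_bot_eq]
      have hop : σ i ^ 2 = σ i := by
        ext x
        have hx0 : x ∈ N₀ := hN0top ▸ Submodule.mem_top
        rw [hN₀] at hx0
        have hx : f₀ x = 0 := mem_ker.mp hx0
        rw [hf₀] at hx
        simp only [LinearMap.add_apply] at hx
        exact S3RepAux.eq_of_add_eq_zero (F := F) hx
      have h23 : σ i ^ 3 = σ i ^ 2 * σ i := by rw [pow_succ]
      rw [hop, ← sq, hop, hA3] at h23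
      exact h23.symm
    have hrk1 : 1 ≤ finrank F ↥N₁ := by
      rcases Nat.eq_zero_or_pos (finrank F ↥N₁) with h0 | h
      · exact absurd (Submodule.finrank_eq_zero.mp h0) hN₁ne
      · exact h
    set s₀ : Finset ι := (s.erase i).filter (fun j => ∃ x ∈ N₀, σ j x ≠ x) with hs₀
    set s₁ : Finset ι := (s.erase i).filter (fun j => ∃ x ∈ N₁, σ j x ≠ x) with hs₁
    have hcover : s.erase i ⊆ s₀ ∪ s₁ := by
      intro j hj
      have hjs : j ∈ s := Finset.mem_of_mem_erase hj
      by_contra hns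
      rw [Finset.mem_union] at hns
      push_neg at hns
      obtain ⟨hn0, hn1⟩ := hns
      rw [hs₀, Finset.mem_filter] at hn0
      rw [hs₁, Finset.mem_filter] at hn1
      push_neg at hn0 hn1
      have h0 := hn0 hj
      have h1 := hn1 hj
      apply hne j hjs
      ext x
      have hxm : x ∈ N₀ ⊔ N₁ := by rw [hsupN]; exact Submodule.mem_top
      obtain ⟨u, hu, v, hv, huv⟩ := Submodule.mem_sup.mp hxm
      rw [← huv]
      simp only [Module.End.one_apply, map_add]
      rw [h0 u hu, h1 v hv]
    -- restricted family on N₁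
    set A₁ : Module.End F ↥N₁ := (σ i).restrict (hmσ1 i hi) with hA₁
    have hA₁quad : A₁ ^ 2 + A₁ + 1 = 0 := by
      ext x
      obtain ⟨x, hx⟩ := x
      rw [hN₁] at hx
      have hx' : g₀ x = 0 := mem_ker.mp hx
      rw [hg₀] at hx'
      simp only [LinearMap.add_apply, Module.End.one_apply] at hx'
      rw [hA₁, Module.End.pow_restrict]
      simpa [LinearMap.restrict_apply] using hx'
    have h2F : (2 : F) = 0 := by
      have := CharP.cast_eq_zero F 2
      exact_mod_cast this
    have hcc : c ^ 2 + c = 1 := by linear_combination hc - h2F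
    have hc3 : c ^ 3 = 1 := by linear_combination (c - 1) * hc
    have hc22 : c ^ 2 * c ^ 2 = c := by
      rw [show c ^ 2 * c ^ 2 = c ^ 3 * c by ring, hc3, one_mul]
    set e₁ : Module.End F ↥N₁ := A₁ + c • 1 with he₁
    set e₂ : Module.End F ↥N₁ := A₁ + c ^ 2 • 1 with he₂
    have hesum : e₁ + e₂ = 1 := by
      rw [he₁, he₂]
      have h : A₁ + c • 1 + (A₁ + c ^ 2 • 1)
          = (A₁ + A₁) + (c ^ 2 + c) • (1 : Module.End F ↥N₁) := by
        rw [add_smul]; abel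
      rw [h, S3RepAux.end_add_self A₁, hcc, one_smul, zero_add]
    have hexp : ∀ a b : F, (A₁ + a • 1) * (A₁ + b • 1)
        = A₁ ^ 2 + (a + b) • A₁ + (a * b) • (1 : Module.End F ↥N₁) := by
      intro a b
      simp only [mul_add, add_mul, mul_smul_comm, smul_mul_assoc, mul_one, one_mul,
        smul_smul, sq, add_smul, smul_add]
      rw [mul_comm b a]
      abel
    have hefg : e₁ * e₂ = 0 := by
      rw [he₁, he₂, hexp, show c + c ^ 2 = 1 by rw [add_comm]; exact hcc, one_smul,
        show c * c ^ 2 = c ^ 3 by ring, hc3, one_smul]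
      exact hA₁quad
    have hegf : e₂ * e₁ = 0 := by
      rw [he₁, he₂, hexp, hcc, one_smul, show c ^ 2 * c = c ^ 3 by ring, hc3, one_smul]
      exact hA₁quad
    set E₁ : Submodule F ↥N₁ := ker e₁ with hE₁
    set E₂ : Submodule F ↥N₁ := ker e₂ with hE₂
    have hrkE : finrank F ↥E₁ + finrank F ↥E₂ = finrank F ↥N₁ :=
      S3RepAux.finrank_split hesum hefg hegf
    have hsupE : E₁ ⊔ E₂ = ⊤ := S3RepAux.ker_sup_eq_top hesum hefg hegf
    set σ₁ : ι → Module.End F ↥N₁ :=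
      fun j => if hj : j ∈ s then (σ j).restrict (hmσ1 j hj) else 1 with hσ₁
    set τ₁ : ι → Module.End F ↥N₁ :=
      fun j => if hj : j ∈ s then (τ j).restrict (hmτ1 j hj) else 1 with hτ₁
    have hσ₁eq : ∀ j (hj : j ∈ s), σ₁ j = (σ j).restrict (hmσ1 j hj) := by
      intro j hj
      rw [hσ₁]
      simp only [dif_pos hj]
    have hτ₁eq : ∀ j (hj : j ∈ s), τ₁ j = (τ j).restrict (hmτ1 j hj) := by
      intro j hj
      rw [hτ₁]
      simp only [dif_pos hj]
    -- restricted relations on N₁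
    have h3₁ : ∀ j ∈ s, σ₁ j ^ 3 = 1 := by
      intro j hj
      rw [hσ₁eq j hj, Module.End.pow_restrict]
      exact (S3RepAux.restrict_eq_of_eq (h3 j hj) _ (fun x hx => hx)).trans
        (S3RepAux.restrict_one' _)
    have hσσ₁ : ∀ j ∈ s, ∀ j' ∈ s, Commute (σ₁ j) (σ₁ j') := by
      intro j hj j' hj'
      rw [hσ₁eq j hj, hσ₁eq j' hj']
      exact LinearMap.restrict_commute (hσσ j hj j' hj') _ _
    have hτσ₁ : ∀ j ∈ s, ∀ j' ∈ s, j ≠ j' → Commute (τ₁ j) (σ₁ j') := by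
      intro j hj j' hj' hjj'
      rw [hτ₁eq j hj, hσ₁eq j' hj']
      exact LinearMap.restrict_commute (hτσ j hj j' hj' hjj') _ _
    have hconj₁ : ∀ j ∈ s, τ₁ j * σ₁ j = σ₁ j ^ 2 * τ₁ j := by
      intro j hj
      rw [hτ₁eq j hj, hσ₁eq j hj, Module.End.pow_restrict, S3RepAux.restrict_mul',
        S3RepAux.restrict_mul']
      exact S3RepAux.restrict_eq_of_eq (hconj j hj) _ _
    have hτinj₁ : ∀ j ∈ s, Function.Injective (τ₁ j) := by
      intro j hj
      rw [hτ₁eq j hj]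
      intro a b hab
      exact Subtype.ext (hτinj j hj (congrArg Subtype.val hab))
    have hA₁σ₁ : σ₁ i = A₁ := by rw [hσ₁eq i hi, hA₁]
    -- E-level stability
    have hmE : ∀ (B : Module.End F ↥N₁), Commute B A₁ →
        (∀ x ∈ E₁, B x ∈ E₁) ∧ (∀ x ∈ E₂, B x ∈ E₂) := by
      intro B hB
      constructor
      · rw [hE₁]
        apply S3RepAux.ker_mapsTo
        rw [he₁]
        exact hB.add_right (S3RepAux.smul_one_commute c B)
      · rw [hE₂]
        apply S3RepAux.ker_mapsTo
        rw [he₂]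
        exact hB.add_right (S3RepAux.smul_one_commute (c ^ 2) B)
    have hmσE : ∀ j ∈ s.erase i, (∀ x ∈ E₁, σ₁ j x ∈ E₁) ∧ (∀ x ∈ E₂, σ₁ j x ∈ E₂) := by
      intro j hj
      have hjs := Finset.mem_of_mem_erase hj
      exact hmE _ (hA₁σ₁ ▸ hσσ₁ j hjs i hi)
    have hmτE : ∀ j ∈ s.erase i, (∀ x ∈ E₁, τ₁ j x ∈ E₁) ∧ (∀ x ∈ E₂, τ₁ j x ∈ E₂) := by
      intro j hj
      have hjs := Finset.mem_of_mem_erase hj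
      have hji := (Finset.mem_erase.mp hj).1
      exact hmE _ (hA₁σ₁ ▸ hτσ₁ j hjs i hi hji)
    -- the swap
    have hA₁τrel : A₁ * τ₁ i = τ₁ i * A₁ ^ 2 := by
      rw [hτ₁eq i hi, hA₁, Module.End.pow_restrict, S3RepAux.restrict_mul',
        S3RepAux.restrict_mul']
      exact S3RepAux.restrict_eq_of_eq hτiA2.symm _ _
    have hτ₁inj : Function.Injective (τ₁ i) := hτinj₁ i hi
    have hswap12 : ∀ x ∈ E₁, τ₁ i x ∈ E₂ := by
      intro x hx
      rw [hE₁] at hx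
      have hx' : A₁ x = c • x := by
        have h0 : e₁ x = 0 := mem_ker.mp hx
        rw [he₁] at h0
        simp only [LinearMap.add_apply, LinearMap.smul_apply, Module.End.one_apply] at h0
        exact S3RepAux.eq_of_add_eq_zero (F := F) h0
      have hkey : A₁ (τ₁ i x) = c ^ 2 • τ₁ i x := by
        have h := congrArg (fun φ : Module.End F ↥N₁ => φ x) hA₁τrel
        simp only [Module.End.mul_apply] at h
        have h2 : (A₁ ^ 2) x = c ^ 2 • x := by
          rw [sq, Module.End.mul_apply, hx', map_smul, hx', smul_smul, ← sq]
        rw [h, h2, map_smul]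
      rw [hE₂, mem_ker, he₂]
      simp only [LinearMap.add_apply, LinearMap.smul_apply, Module.End.one_apply]
      rw [hkey]
      exact S3RepAux.add_self_zero (F := F) _
    have hswap21 : ∀ x ∈ E₂, τ₁ i x ∈ E₁ := by
      intro x hx
      rw [hE₂] at hx
      have hx' : A₁ x = c ^ 2 • x := by
        have h0 : e₂ x = 0 := mem_ker.mp hx
        rw [he₂] at h0
        simp only [LinearMap.add_apply, LinearMap.smul_apply, Module.End.one_apply] at h0
        exact S3RepAux.eq_of_add_eq_zero (F := F) h0
      have hkey : A₁ (τ₁ i x) = c • τ₁ i x := by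
        have h := congrArg (fun φ : Module.End F ↥N₁ => φ x) hA₁τrel
        simp only [Module.End.mul_apply] at h
        have h2 : (A₁ ^ 2) x = c • x := by
          rw [sq, Module.End.mul_apply, hx', map_smul, hx', smul_smul, hc22]
        rw [h, h2, map_smul]
      rw [hE₁, mem_ker, he₁]
      simp only [LinearMap.add_apply, LinearMap.smul_apply, Module.End.one_apply]
      rw [hkey]
      exact S3RepAux.add_self_zero (F := F) _
    -- E₁ E₂ nonzero
    have hEboth : E₁ ≠ ⊥ ∧ E₂ ≠ ⊥ := by
      haveI hnt : Nontrivial ↥N₁ := by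
        obtain ⟨y, hy, hyne⟩ := (Submodule.ne_bot_iff N₁).mp hN₁ne
        exact ⟨⟨y, hy⟩, 0, by simp [Subtype.ext_iff, hyne]⟩
      have himp12 : E₁ = ⊥ → E₂ = ⊥ := by
        intro hb
        rw [eq_bot_iff]
        intro x hx
        have hmem := hswap21 x hx
        rw [hb, Submodule.mem_bot] at hmem
        rw [Submodule.mem_bot]
        exact hτ₁inj (by rw [map_zero]; exact hmem)
      have himp21 : E₂ = ⊥ → E₁ = ⊥ := by
        intro hb
        rw [eq_bot_iff]
        intro x hx
        have hmem := hswap12 x hx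
        rw [hb, Submodule.mem_bot] at hmem
        rw [Submodule.mem_bot]
        exact hτ₁inj (by rw [map_zero]; exact hmem)
      have hnboth : ¬(E₁ = ⊥ ∧ E₂ = ⊥) := by
        rintro ⟨h1, h2⟩
        rw [h1, h2, sup_idem] at hsupE
        obtain ⟨y, hy⟩ := exists_ne (0 : ↥N₁)
        have : y ∈ (⊥ : Submodule F ↥N₁) := by rw [hsupE]; exact Submodule.mem_top
        exact hy ((Submodule.mem_bot _).mp this)
      exact ⟨fun h1 => hnboth ⟨h1, himp12 h1⟩, fun h2 => hnboth ⟨himp21 h2, h2⟩⟩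
    have hrkE₁ : 1 ≤ finrank F ↥E₁ := by
      rcases Nat.eq_zero_or_pos (finrank F ↥E₁) with h0 | h
      · exact absurd (Submodule.finrank_eq_zero.mp h0) hEboth.1
      · exact h
    have hrkE₂ : 1 ≤ finrank F ↥E₂ := by
      rcases Nat.eq_zero_or_pos (finrank F ↥E₂) with h0 | h
      · exact absurd (Submodule.finrank_eq_zero.mp h0) hEboth.2
      · exact h
    -- witnesses on E₁, E₂ for j ∈ s₁
    have hwitness : ∀ j ∈ s₁, (∃ x ∈ E₁, σ₁ j x ≠ x) ∧ (∃ x ∈ E₂, σ₁ j x ≠ x) := by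
      intro j hj
      rw [hs₁, Finset.mem_filter] at hj
      obtain ⟨hje, y, hyN₁, hy⟩ := hj
      have hjs : j ∈ s := Finset.mem_of_mem_erase hje
      have hji : j ≠ i := (Finset.mem_erase.mp hje).1
      have hx₀ne : σ₁ j ⟨y, hyN₁⟩ ≠ ⟨y, hyN₁⟩ := by
        rw [hσ₁eq j hjs]
        intro hEq
        exact hy (by simpa [Subtype.ext_iff, LinearMap.restrict_apply] using hEq)
      obtain ⟨u, hu, v, hv, huv⟩ := Submodule.mem_sup.mp
        (show (⟨y, hyN₁⟩ : ↥N₁) ∈ E₁ ⊔ E₂ by rw [hsupE]; exact Submodule.mem_top)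
      have hcase : σ₁ j u ≠ u ∨ σ₁ j v ≠ v := by
        by_contra hcc'
        push_neg at hcc'
        apply hx₀ne
        rw [← huv, map_add, hcc'.1, hcc'.2]
      have hcommτσ : ∀ z, τ₁ i (σ₁ j z) = σ₁ j (τ₁ i z) := by
        intro z
        have hcm : Commute (τ₁ i) (σ₁ j) := hτσ₁ i hi j hjs (fun h => hji h.symm)
        have := congrArg (fun φ : Module.End F ↥N₁ => φ z) hcm.eq
        simpa [Module.End.mul_apply] using this
      constructor
      · rcases hcase with h | h
        · exact ⟨u, hu, h⟩
        · refine ⟨τ₁ i v, hswap21 v hv, ?_⟩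
          rw [← hcommτσ]
          intro hEq
          exact h (hτ₁inj hEq)
      · rcases hcase with h | h
        · refine ⟨τ₁ i u, hswap12 u hu, ?_⟩
          rw [← hcommτσ]
          intro hEq
          exact h (hτ₁inj hEq)
        · exact ⟨v, hv, h⟩
    -- recursive call on N₀
    have hbound₀ : 2 * s₀.card ≤ finrank F ↥N₀ := by
      have hsub₀ : ∀ j ∈ s₀, j ∈ s := by
        intro j hj
        rw [hs₀, Finset.mem_filter] at hj
        exact Finset.mem_of_mem_erase hj.1
      have hd₀ : finrank F ↥N₀ ≤ d := by omega
      refine IH (fun j => if hj : j ∈ s then (σ j).restrict (hmσ0 j hj) else 1)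
        (fun j => if hj : j ∈ s then (τ j).restrict (hmτ0 j hj) else 1) s₀ hd₀
        ?_ ?_ ?_ ?_ ?_ ?_
      · intro j hj
        have hjs := hsub₀ j hj
        simp only [dif_pos hjs]
        rw [Module.End.pow_restrict]
        exact (S3RepAux.restrict_eq_of_eq (h3 j hjs) _ (fun x hx => hx)).trans
          (S3RepAux.restrict_one' _)
      · intro j hj j' hj'
        simp only [dif_pos (hsub₀ j hj), dif_pos (hsub₀ j' hj')]
        exact LinearMap.restrict_commute (hσσ j (hsub₀ j hj) j' (hsub₀ j' hj')) _ _
      · intro j hj j' hj' hjj'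
        simp only [dif_pos (hsub₀ j hj), dif_pos (hsub₀ j' hj')]
        exact LinearMap.restrict_commute (hτσ j (hsub₀ j hj) j' (hsub₀ j' hj') hjj') _ _
      · intro j hj
        have hjs := hsub₀ j hj
        simp only [dif_pos hjs]
        rw [Module.End.pow_restrict, S3RepAux.restrict_mul', S3RepAux.restrict_mul']
        exact S3RepAux.restrict_eq_of_eq (hconj j hjs) _ _
      · intro j hj
        have hjs := hsub₀ j hj
        simp only [dif_pos hjs]
        intro a b hab
        exact Subtype.ext (hτinj j hjs (congrArg Subtype.val hab))
      · intro j hj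
        have hjs := hsub₀ j hj
        have hex : ∃ x ∈ N₀, σ j x ≠ x := by
          have hj' := hj
          rw [hs₀, Finset.mem_filter] at hj'
          exact hj'.2
        simp only [dif_pos hjs]
        intro h1
        obtain ⟨x, hx, hxne⟩ := hex
        exact hxne ((S3RepAux.restrict_eq_one_iff _).mp h1 x hx)
    -- recursive calls on E₁ and E₂
    have hsub₁ : ∀ j ∈ s₁, j ∈ s.erase i := by
      intro j hj
      rw [hs₁, Finset.mem_filter] at hj
      exact hj.1
    have hsub₁s : ∀ j ∈ s₁, j ∈ s := fun j hj => Finset.mem_of_mem_erase (hsub₁ j hj)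
    have hboundE₁ : 2 * s₁.card ≤ finrank F ↥E₁ := by
      have hdE : finrank F ↥E₁ ≤ d := by
        have hle := Submodule.finrank_le N₁
        omega
      refine IH (fun j => if hj : j ∈ s.erase i then (σ₁ j).restrict ((hmσE j hj).1) else 1)
        (fun j => if hj : j ∈ s.erase i then (τ₁ j).restrict ((hmτE j hj).1) else 1) s₁ hdE
        ?_ ?_ ?_ ?_ ?_ ?_
      · intro j hj
        have hje := hsub₁ j hj
        simp only [dif_pos hje]
        rw [Module.End.pow_restrict]
        exact (S3RepAux.restrict_eq_of_eq (h3₁ j (hsub₁s j hj)) _ (fun x hx => hx)).trans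
          (S3RepAux.restrict_one' _)
      · intro j hj j' hj'
        simp only [dif_pos (hsub₁ j hj), dif_pos (hsub₁ j' hj')]
        exact LinearMap.restrict_commute (hσσ₁ j (hsub₁s j hj) j' (hsub₁s j' hj')) _ _
      · intro j hj j' hj' hjj'
        simp only [dif_pos (hsub₁ j hj), dif_pos (hsub₁ j' hj')]
        exact LinearMap.restrict_commute (hτσ₁ j (hsub₁s j hj) j' (hsub₁s j' hj') hjj') _ _
      · intro j hj
        have hje := hsub₁ j hj
        simp only [dif_pos hje]
        rw [Module.End.pow_restrict, S3RepAux.restrict_mul', S3RepAux.restrict_mul']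
        exact S3RepAux.restrict_eq_of_eq (hconj₁ j (hsub₁s j hj)) _ _
      · intro j hj
        simp only [dif_pos (hsub₁ j hj)]
        intro a b hab
        exact Subtype.ext (hτinj₁ j (hsub₁s j hj) (congrArg Subtype.val hab))
      · intro j hj
        simp only [dif_pos (hsub₁ j hj)]
        intro h1
        obtain ⟨x, hx, hxne⟩ := (hwitness j hj).1
        exact hxne ((S3RepAux.restrict_eq_one_iff _).mp h1 x hx)
    have hboundE₂ : 2 * s₁.card ≤ finrank F ↥E₂ := by
      have hdE : finrank F ↥E₂ ≤ d := by
        have hle := Submodule.finrank_le N₁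
        omega
      refine IH (fun j => if hj : j ∈ s.erase i then (σ₁ j).restrict ((hmσE j hj).2) else 1)
        (fun j => if hj : j ∈ s.erase i then (τ₁ j).restrict ((hmτE j hj).2) else 1) s₁ hdE
        ?_ ?_ ?_ ?_ ?_ ?_
      · intro j hj
        have hje := hsub₁ j hj
        simp only [dif_pos hje]
        rw [Module.End.pow_restrict]
        exact (S3RepAux.restrict_eq_of_eq (h3₁ j (hsub₁s j hj)) _ (fun x hx => hx)).trans
          (S3RepAux.restrict_one' _)
      · intro j hj j' hj'
        simp only [dif_pos (hsub₁ j hj), dif_pos (hsub₁ j' hj')]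
        exact LinearMap.restrict_commute (hσσ₁ j (hsub₁s j hj) j' (hsub₁s j' hj')) _ _
      · intro j hj j' hj' hjj'
        simp only [dif_pos (hsub₁ j hj), dif_pos (hsub₁ j' hj')]
        exact LinearMap.restrict_commute (hτσ₁ j (hsub₁s j hj) j' (hsub₁s j' hj') hjj') _ _
      · intro j hj
        have hje := hsub₁ j hj
        simp only [dif_pos hje]
        rw [Module.End.pow_restrict, S3RepAux.restrict_mul', S3RepAux.restrict_mul']
        exact S3RepAux.restrict_eq_of_eq (hconj₁ j (hsub₁s j hj)) _ _
      · intro j hj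
        simp only [dif_pos (hsub₁ j hj)]
        intro a b hab
        exact Subtype.ext (hτinj₁ j (hsub₁s j hj) (congrArg Subtype.val hab))
      · intro j hj
        simp only [dif_pos (hsub₁ j hj)]
        intro h1
        obtain ⟨x, hx, hxne⟩ := (hwitness j hj).2
        exact hxne ((S3RepAux.restrict_eq_one_iff _).mp h1 x hx)
    -- combine
    have hcard : s.card ≤ s₀.card + s₁.card + 1 := by
      have h1 : (s.erase i).card ≤ (s₀ ∪ s₁).card := Finset.card_le_card hcover
      have h2 := Finset.card_union_le s₀ s₁
      have h3' : (s.erase i).card = s.card - 1 := Finset.card_erase_of_mem hi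
      have h4 : 1 ≤ s.card := Finset.card_pos.mpr ⟨i, hi⟩
      omega
    omega

open TensorProduct Polynomial

theorem S3Rep.aux (k : ℕ) {F : Type*} [Field F] [CharP F 2] {c : F} (hc : c ^ 2 + c + 1 = 0)
    {M : Type*} [AddCommGroup M] [Module F M] [FiniteDimensional F M]
    (ρ : Representation F (Π _ : Fin k, Equiv.Perm (Fin 3)) M)
    (hne : ∀ g : (Π _ : Fin k, Equiv.Perm (Fin 3)), g ≠ 1 → ρ g ≠ 1) :
    2 * k ≤ Module.finrank F M := by
  classical
  set c3 : Equiv.Perm (Fin 3) := finRotate 3 with hc3def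
  set t2 : Equiv.Perm (Fin 3) := Equiv.swap 0 1 with ht2def
  have hc33 : c3 ^ 3 = 1 := by rw [hc3def]; decide
  have hconj : t2 * c3 = c3 ^ 2 * t2 := by rw [hc3def, ht2def]; decide
  have hc3ne : c3 ≠ 1 := by rw [hc3def]; decide
  set e : Fin k → (Π _ : Fin k, Equiv.Perm (Fin 3)) := fun i => Pi.mulSingle i c3 with he
  set t : Fin k → (Π _ : Fin k, Equiv.Perm (Fin 3)) := fun i => Pi.mulSingle i t2 with ht
  have hcard : (Finset.univ : Finset (Fin k)).card = k := by simp
  rw [show 2 * k = 2 * (Finset.univ : Finset (Fin k)).card by rw [hcard]]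
  refine S3Rep.mainLemma hc (Module.finrank F M) (fun i => ρ (e i)) (fun i => ρ (t i))
    Finset.univ le_rfl ?_ ?_ ?_ ?_ ?_ ?_
  · intro i _
    rw [← map_pow]
    simp only [he]
    rw [← Pi.mulSingle_pow, hc33, Pi.mulSingle_one, map_one]
  · intro i _ j _
    by_cases hij : i = j
    · subst hij; exact Commute.refl _
    · exact Commute.map (Pi.mulSingle_commute hij c3 c3) ρ
  · intro i _ j _ hij
    exact Commute.map (Pi.mulSingle_commute hij t2 c3) ρ
  · intro i _
    have h : t i * e i = e i ^ 2 * t i := by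
      simp only [he, ht]
      rw [← Pi.mulSingle_pow, ← Pi.mulSingle_mul, hconj]
      exact Pi.mulSingle_mul i _ _
    calc ρ (t i) * ρ (e i) = ρ (t i * e i) := (map_mul ρ _ _).symm
      _ = ρ (e i ^ 2 * t i) := by rw [h]
      _ = ρ (e i) ^ 2 * ρ (t i) := by rw [map_mul, map_pow]
  · intro i _
    intro a b hab
    have h1 : (ρ ((t i)⁻¹) * ρ (t i)) a = (ρ ((t i)⁻¹) * ρ (t i)) b := by
      simp only [Module.End.mul_apply]
      rw [hab]
    rw [← map_mul, inv_mul_cancel, map_one] at h1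
    simpa using h1
  · intro i _
    apply hne
    intro h
    apply hc3ne
    have := congrFun h i
    simpa [he, Pi.mulSingle_eq_same] using this

/-- A faithful representation of a direct product of `k` copies of the
symmetric group `S₃` over a field of characteristic 2 has dimension at
least `2k`. -/
theorem faithful_rep_product_sym3_dim_ge
    (k : ℕ)
    {F : Type*} [Field F] [CharP F 2]
    {M : Type*} [AddCommGroup M] [Module F M] [FiniteDimensional F M]
    (ρ : Representation F (Π _ : Fin k, Equiv.Perm (Fin 3)) M)
    (hfaithful : Function.Injective ρ) :
    2 * k ≤ Module.finrank F M := by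
  classical
  have hne : ∀ g : (Π _ : Fin k, Equiv.Perm (Fin 3)), g ≠ 1 → ρ g ≠ 1 := by
    intro g hg h1
    exact hg (hfaithful (by rw [h1, map_one]))
  by_cases hroot : ∃ c : F, c ^ 2 + c + 1 = 0
  · obtain ⟨c, hc⟩ := hroot
    exact S3Rep.aux k hc ρ hne
  · -- base change to F[X]/(X²+X+1)
    push_neg at hroot
    set q : Polynomial F := Polynomial.X ^ 2 + Polynomial.X + 1 with hq
    have hqdeg : q.natDegree = 2 := by rw [hq]; compute_degree!
    have hq0 : q ≠ 0 := by
      intro h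
      rw [h, Polynomial.natDegree_zero] at hqdeg
      omega
    have hirr : Irreducible q := by
      rw [Polynomial.irreducible_iff_roots_eq_zero_of_degree_le_three (by omega) (by omega)]
      rw [Multiset.eq_zero_iff_forall_notMem]
      intro r hr
      rw [Polynomial.mem_roots hq0] at hr
      apply hroot r
      have := hr
      rw [hq] at this
      simpa [Polynomial.IsRoot] using this
    haveI : Fact (Irreducible q) := ⟨hirr⟩
    set F' := AdjoinRoot q with hF'
    haveI : CharP F' 2 := charP_of_injective_algebraMap (algebraMap F F').injective 2
    set c : F' := AdjoinRoot.root q with hcdef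
    have hc : c ^ 2 + c + 1 = 0 := by
      have h := AdjoinRoot.eval₂_root q
      rw [hq] at h
      simpa [Polynomial.eval₂_add, Polynomial.eval₂_pow] using h
    -- base change
    letI : Module F' (F' ⊗[F] M) := inferInstance
    have hj : Function.Injective (fun x : M => (1 : F') ⊗ₜ[F] x) := by
      have hinj : Function.Injective (LinearMap.rTensor M (Algebra.linearMap F F')) :=
        Module.Flat.rTensor_preserves_injective_linearMap _ (algebraMap F F').injective
      intro a b hab
      have h1 : (LinearMap.rTensor M (Algebra.linearMap F F')) ((1 : F) ⊗ₜ[F] a)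
          = (LinearMap.rTensor M (Algebra.linearMap F F')) ((1 : F) ⊗ₜ[F] b) := by
        simp only [LinearMap.rTensor_tmul, Algebra.linearMap_apply, map_one]
        exact hab
      have h2 := hinj h1
      have h3 := congrArg (TensorProduct.lid F M) h2
      simpa using h3
    set bc : Module.End F M →* Module.End F' (F' ⊗[F] M) :=
      (Module.End.baseChangeHom F F' M).toRingHom.toMonoidHom with hbc
    set ρ' : Representation F' (Π _ : Fin k, Equiv.Perm (Fin 3)) (F' ⊗[F] M) :=
      bc.comp ρ with hρ'
    have hne' : ∀ g : (Π _ : Fin k, Equiv.Perm (Fin 3)), g ≠ 1 → ρ' g ≠ 1 := by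
      intro g hg h1
      have hgne := hne g hg
      apply hgne
      -- derive ρ g = 1 from baseChange = 1 via witnesses
      ext x
      have := congrArg (fun φ : Module.End F' (F' ⊗[F] M) => φ ((1 : F') ⊗ₜ[F] x)) h1
      simp only [Module.End.one_apply] at this
      have hbt : (ρ' g) ((1 : F') ⊗ₜ[F] x) = (1 : F') ⊗ₜ[F] (ρ g x) := by
        rw [hρ']
        rfl
      rw [hbt] at this
      have := hj this
      simpa using this
    have hrk : Module.finrank F' (F' ⊗[F] M) = Module.finrank F M :=
      Module.finrank_baseChange
    rw [← hrk]
    exact S3Rep.aux k hc ρ' hne'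
end

section
/- Let V = F₂^{2d} with a nondegenerate quadratic form of plus type and let t be an involution in the orthogonal group with [V,t] = Im(t−1) totally singular of dimension d (full defect). Then there exists a maximal totally singular subspace F of V with F ∩ F^t = 0. -/
/-!
Since `t² = 1` in characteristic 2, `t - 1` squares to zero, so `E = [V,t]` lies in the fixed space
of `t`; both have dimension `d`, hence they coincide. A totally singular `E` of half the dimension
has a totally singular complement `F`: start from any complement `W` and replace it by
`{w - φ w | w ∈ W}` for a linear `φ : W → E` with `polar Q w (φ w) = Q w`, which exists because the polar
form pairs `E` perfectly with `W`. If `x = t y ∈ F` with `y ∈ F`, then `x - y ∈ [V,t] = E` forces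
`x = y`, so `x` is fixed by `t`, lies in `E`, and vanishes.
-/

open Module QuadraticMap

namespace Submodule

variable {R M : Type*} [Ring R] [AddCommGroup M] [Module R M]

theorem isCompl_range_subtype_sub {E W : Submodule R M} (hEW : IsCompl E W) (φ : W →ₗ[R] E) :
    IsCompl E (LinearMap.range (W.subtype - E.subtype ∘ₗ φ)) := by
  constructor
  · rw [disjoint_def]
    rintro _ hE ⟨w, rfl⟩
    have hw : (w : M) ∈ E := by
      simpa using E.add_mem hE (φ w).2
    have : w = 0 := Subtype.ext ((disjoint_def.mp hEW.disjoint) _ hw w.2)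
    simp [this]
  · rw [codisjoint_iff_exists_add_eq]
    intro v
    obtain ⟨e, w, he, hw, rfl⟩ := codisjoint_iff_exists_add_eq.mp hEW.codisjoint v
    exact ⟨e + φ ⟨w, hw⟩, _, E.add_mem he (φ _).2, ⟨⟨w, hw⟩, rfl⟩, by simp⟩

end Submodule

namespace QuadraticMap

section CommRing

variable {R M N : Type*} [CommRing R] [AddCommGroup M] [Module R M] [AddCommGroup N] [Module R N]
  {Q : QuadraticMap R M N} {E W : Submodule R M}

theorem polar_eq_zero_of_forall_eq_zero (hE : ∀ x ∈ E, Q x = 0) {x y : M} (hx : x ∈ E)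
    (hy : y ∈ E) : polar Q x y = 0 := by
  rw [polar, hE _ (E.add_mem hx hy), hE x hx, hE y hy, sub_zero, sub_zero]

variable (Q E W) in
def polarPairing : E →ₗ[R] W →ₗ[R] N :=
  (LinearMap.compl₁₂ (polarBilin Q) W.subtype E.subtype).flip

@[simp]
theorem polarPairing_apply (e : E) (w : W) : polarPairing Q E W e w = polar Q w e := rfl

theorem polarPairing_injective (hnd : ∀ x, (∀ y, polar Q x y = 0) → x = 0)
    (hE : ∀ x ∈ E, Q x = 0) (hEW : IsCompl E W) : Function.Injective (polarPairing Q E W) := by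
  rw [← LinearMap.ker_eq_bot, LinearMap.ker_eq_bot']
  intro e he
  refine Subtype.ext (hnd e fun v => ?_)
  obtain ⟨a, w, ha, hw, rfl⟩ := Submodule.codisjoint_iff_exists_add_eq.mp hEW.codisjoint v
  have hew : polar Q w e = 0 := by simpa using LinearMap.congr_fun he ⟨w, hw⟩
  rw [polar_add_right, polar_eq_zero_of_forall_eq_zero hE e.2 ha, polar_comm, hew, add_zero]

end CommRing

section Field

variable {K V : Type*} [Field K] [AddCommGroup V] [Module K V] {Q : QuadraticForm K V}
  {E W : Submodule K V}

theorem exists_polar_apply_eq [FiniteDimensional K V]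
    (hnd : ∀ x, (∀ y, polar Q x y = 0) → x = 0) (hE : ∀ x ∈ E, Q x = 0) (hEW : IsCompl E W)
    (hdim : finrank K E + finrank K E = finrank K V) :
    ∃ φ : W →ₗ[K] E, ∀ w : W, polar Q w (φ w) = Q w := by
  -- `Q` on `W` is the diagonal of a possibly non-symmetric bilinear form; in characteristic 2 it is
  -- not determined by its polar form.
  obtain ⟨C, hC⟩ := LinearMap.BilinMap.toQuadraticMap_surjective (Q.comp W.subtype)
  have hrank : finrank K E = finrank K (Dual K W) := by
    have := Submodule.finrank_add_eq_of_isCompl hEW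
    rw [Subspace.dual_finrank_eq]
    omega
  let ψ := LinearMap.linearEquivOfInjective _ (polarPairing_injective hnd hE hEW) hrank
  refine ⟨ψ.symm.toLinearMap ∘ₗ C, fun w => ?_⟩
  have hψ : polarPairing Q E W (ψ.symm (C w)) = C w := ψ.apply_symm_apply (C w)
  have hCw : C w w = Q w := congrArg (· w) hC
  simpa [hCw] using LinearMap.congr_fun hψ w

theorem exists_isCompl_forall_eq_zero [FiniteDimensional K V]
    (hnd : ∀ x, (∀ y, polar Q x y = 0) → x = 0) (hE : ∀ x ∈ E, Q x = 0)
    (hdim : finrank K E + finrank K E = finrank K V) :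
    ∃ F : Submodule K V, IsCompl E F ∧ ∀ x ∈ F, Q x = 0 := by
  obtain ⟨W, hEW⟩ := E.exists_isCompl
  obtain ⟨φ, hφ⟩ := exists_polar_apply_eq hnd hE hEW hdim
  refine ⟨_, Submodule.isCompl_range_subtype_sub hEW φ, ?_⟩
  rintro _ ⟨w, rfl⟩
  have hQ := polar_neg_right Q (w : V) (φ w : V)
  rw [polar, QuadraticMap.map_neg, hE _ (φ w).2, ← sub_eq_add_neg, hφ] at hQ
  simpa using hQ

end Field

end QuadraticMap

namespace LinearMap

variable {R M : Type*} [Ring R] [AddCommGroup M] [Module R M] {t : M →ₗ[R] M}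

theorem range_sub_id_le_ker_sub_id [CharP R 2] (ht : t ∘ₗ t = id) :
    range (t - id) ≤ ker (t - id) := by
  rintro _ ⟨y, rfl⟩
  have htt : t (t y) = y := LinearMap.congr_fun ht y
  have h2 : y - t y - (t y - y) = (2 : R) • (y - t y) := by
    rw [two_smul]
    abel
  rw [mem_ker, sub_apply, id_apply, sub_apply, id_apply, map_sub, htt, h2, CharTwo.two_eq_zero,
    zero_smul]

theorem ker_sub_id_eq_range_sub_id {K V : Type*} [Field K] [CharP K 2] [AddCommGroup V]
    [Module K V] [FiniteDimensional K V] {t : V →ₗ[K] V} (ht : t ∘ₗ t = id)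
    (hdim : finrank K (range (t - id)) + finrank K (range (t - id)) = finrank K V) :
    ker (t - id) = range (t - id) := by
  refine (Submodule.eq_of_le_of_finrank_eq (range_sub_id_le_ker_sub_id ht) ?_).symm
  have := finrank_range_add_finrank_ker (t - id)
  omega

theorem disjoint_map_self_of_disjoint_range_sub_id (hker : ker (t - id) ≤ range (t - id)) {F : Submodule R M}
    (hF : Disjoint F (range (t - id))) : Disjoint F (F.map t) := by
  rw [Submodule.disjoint_def] at hF ⊢
  rintro x hx ⟨y, hy, rfl⟩
  have hxy : t y = y := sub_eq_zero.mp (hF _ (F.sub_mem hx hy) ⟨y, rfl⟩)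
  have hfix : t y ∈ ker (t - id) := by simp [hxy]
  exact hF _ hx (hker hfix)

end LinearMap

theorem exists_totally_singular_complement_swap_general
    (d : ℕ)
    (Q : QuadraticForm (ZMod 2) (Fin (2 * d) → ZMod 2))
    (hnd : ∀ x, (∀ y, QuadraticMap.polar Q x y = 0) → x = 0)
    (t : (Fin (2 * d) → ZMod 2) →ₗ[ZMod 2] (Fin (2 * d) → ZMod 2))
    (ht2 : t ∘ₗ t = LinearMap.id)
    (hcomm_dim : Module.finrank (ZMod 2) (LinearMap.range (t - LinearMap.id)) = d)
    (hcomm_sing : ∀ x ∈ LinearMap.range (t - LinearMap.id), Q x = 0) :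
    ∃ F : Submodule (ZMod 2) (Fin (2 * d) → ZMod 2),
      Module.finrank (ZMod 2) F = d ∧ (∀ x ∈ F, Q x = 0) ∧
      F ⊓ F.map t = ⊥ := by
  have hdim : finrank (ZMod 2) (LinearMap.range (t - LinearMap.id)) +
      finrank (ZMod 2) (LinearMap.range (t - LinearMap.id)) =
      finrank (ZMod 2) (Fin (2 * d) → ZMod 2) := by
    rw [hcomm_dim, finrank_fin_fun]
    ring
  obtain ⟨F, hEF, hF⟩ := QuadraticMap.exists_isCompl_forall_eq_zero hnd hcomm_sing hdim
  refine ⟨F, ?_, hF, disjoint_iff.mp ?_⟩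
  · have := Submodule.finrank_add_eq_of_isCompl hEF
    omega
  · exact LinearMap.disjoint_map_self_of_disjoint_range_sub_id
      (LinearMap.ker_sub_id_eq_range_sub_id ht2 hdim).le hEF.disjoint.symm

/-- Let `V = F₂^(2d)` with a nondegenerate plus-type quadratic form and let
`t` be an involutory isometry whose commutator space `[V,t] = Im(t-1)` is
totally singular of dimension `d` (full defect).  Then there is a maximal
totally singular subspace `F` with `F ∩ F^t = 0`. -/
theorem exists_totally_singular_complement_swap
    (d : ℕ) (hd : 1 ≤ d)
    (Q : QuadraticForm (ZMod 2) (Fin (2 * d) → ZMod 2))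
    (hnd : ∀ x, (∀ y, QuadraticMap.polar Q x y = 0) → x = 0)
    (hplus : ∃ T : Submodule (ZMod 2) (Fin (2 * d) → ZMod 2),
        Module.finrank (ZMod 2) T = d ∧ ∀ x ∈ T, Q x = 0)
    (t : (Fin (2 * d) → ZMod 2) →ₗ[ZMod 2] (Fin (2 * d) → ZMod 2))
    (ht2 : t ∘ₗ t = LinearMap.id)
    (hiso : ∀ x, Q (t x) = Q x)
    (hcomm_dim : Module.finrank (ZMod 2) (LinearMap.range (t - LinearMap.id)) = d)
    (hcomm_sing : ∀ x ∈ LinearMap.range (t - LinearMap.id), Q x = 0) :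
    ∃ F : Submodule (ZMod 2) (Fin (2 * d) → ZMod 2),
      Module.finrank (ZMod 2) F = d ∧ (∀ x ∈ F, Q x = 0) ∧
      F ⊓ F.map t = ⊥ :=
  exists_totally_singular_complement_swap_general d Q hnd t ht2 hcomm_dim hcomm_sing
end

section
/- Let t be an involutory isometry of a nondegenerate quadratic space (V, q) over F₂ and let S ≤ V be a t-invariant nondegenerate subspace on which t acts nontrivially, minimal with these properties (an MNS-subspace). If there exists a singular vector v ∈ S with v ≠ v^t and (v, v^t) = 0, then dim S = 4 and S has a basis u₁, u₂, v₁, v₂ of singular vectors with v₁^t = v₂, u₁^t = u₂, (v_i, u_j) = δ_{ij}, (v₁,v₂) = (u₁,u₂) = 0. Otherwise dim S = 2 with a basis u, v = u^t satisfying (u,v) = 1 and q(u) = q(v). -/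
/-!
Over `F₂` the polar form `B` is alternating, so `B(w, tw) = 1` makes `span {w, tw}` a
`t`-invariant hyperbolic plane, which by minimality is all of `S`; in that plane every vector
moved by `t` has `B(x, tx) = 1`. Hence a single moved `x` with `B(x, tx) = 0` forces
`B(w, tw) = 0` on all of `S`. Nondegeneracy, applied to `v + tv`, gives a partner `u` with
`B(v, u) = 1` and `B(tv, u) = 0`. If `v` is singular, `u` can be made singular (replace it by
`u + v`), and `u, tu, v, tv` are two orthogonal hyperbolic pairs spanning `S`. Otherwise, were
`B(v, tv) = 0` for some moved `v`, every moved vector would be nonsingular; but `u + tv` is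
singular, hence fixed, and pairing `tu + v = u + tv` with `u` gives `B(u, tu) = 1`.
-/

open QuadraticMap Submodule Module

theorem ZMod.eq_zero_or_eq_one (a : ZMod 2) : a = 0 ∨ a = 1 := by
  revert a; decide

section Polar

variable {R V : Type*} [CommRing R] [AddCommGroup V] [Module R V] {Q : QuadraticForm R V}

def PolarNondegOn (Q : QuadraticForm R V) (T : Submodule R V) : Prop :=
  ∀ x ∈ T, (∀ y ∈ T, polar Q x y = 0) → x = 0

theorem polar_map_map {t : V →ₗ[R] V} (hiso : ∀ x, Q (t x) = Q x) (x y : V) :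
    polar Q (t x) (t y) = polar Q x y := by
  simp only [polar, ← map_add, hiso]

section Dual

variable {ι : Type*} [Fintype ι] [DecidableEq ι] {e : ι → V} {σ : Equiv.Perm ι}

theorem polar_sum_smul_of_polar_perm
    (he : ∀ i j, polar Q (e i) (e (σ j)) = if i = j then 1 else 0) (c : ι → R) (j : ι) :
    polar Q (∑ i, c i • e i) (e (σ j)) = c j := by
  rw [← polarBilin_apply_apply, map_sum, LinearMap.sum_apply]
  simp [he]

theorem linearIndependent_of_polar_perm
    (he : ∀ i j, polar Q (e i) (e (σ j)) = if i = j then 1 else 0) :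
    LinearIndependent R e := by
  refine Fintype.linearIndependent_iff.2 fun c hc j => ?_
  rw [← polar_sum_smul_of_polar_perm he c j, hc, polar_zero_left]

theorem polarNondegOn_span_of_polar_perm
    (he : ∀ i j, polar Q (e i) (e (σ j)) = if i = j then 1 else 0) :
    PolarNondegOn Q (span R (Set.range e)) := by
  intro x hx hxT
  obtain ⟨c, rfl⟩ := (mem_span_range_iff_exists_fun R).1 hx
  have hc : c = 0 := funext fun j => by
    rw [← polar_sum_smul_of_polar_perm he c j]
    exact hxT _ (subset_span ⟨σ j, rfl⟩)
  simp [hc]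

theorem finrank_span_eq_card_and_polarNondegOn_of_polar_perm [Nontrivial R]
    (he : ∀ i j, polar Q (e i) (e (σ j)) = if i = j then 1 else 0) :
    finrank R (span R (Set.range e)) = Fintype.card ι ∧
      PolarNondegOn Q (span R (Set.range e)) :=
  ⟨finrank_span_eq_card (linearIndependent_of_polar_perm he),
    polarNondegOn_span_of_polar_perm he⟩

end Dual

variable [CharP R 2]

theorem polar_self_eq_zero (x : V) : polar Q x x = 0 := by
  rw [polar_self, two_nsmul, CharTwo.add_self_eq_zero]

variable [Nontrivial R]

theorem finrank_eq_two_and_polarNondegOn_span_pair {a b : V} (hab : polar Q a b = 1) :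
    finrank R (span R {a, b}) = 2 ∧ PolarNondegOn Q (span R {a, b}) := by
  have he : ∀ i j, polar Q (![a, b] i) (![a, b] (Equiv.addRight 1 j)) =
      if i = j then 1 else 0 := by
    intro i j
    fin_cases i <;> fin_cases j <;> simp [hab, polar_comm Q b a, CharTwo.two_eq_zero]
  have := finrank_span_eq_card_and_polarNondegOn_of_polar_perm he
  rwa [Matrix.range_cons_cons_empty, Fintype.card_fin] at this

theorem finrank_eq_four_and_polarNondegOn_span_two_pairs {a b c d : V}
    (hac : polar Q a c = 1) (hbd : polar Q b d = 1) (hab : polar Q a b = 0)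
    (had : polar Q a d = 0) (hbc : polar Q b c = 0) (hcd : polar Q c d = 0) :
    finrank R (span R {a, b, c, d}) = 4 ∧ PolarNondegOn Q (span R {a, b, c, d}) := by
  have he : ∀ i j, polar Q (![a, b, c, d] i) (![a, b, c, d] (Equiv.addRight 2 j)) =
      if i = j then 1 else 0 := by
    intro i j
    fin_cases i <;> fin_cases j <;>
      simp [hac, hbd, hab, had, hbc, hcd, polar_comm Q b a, polar_comm Q c a,
        polar_comm Q d a, polar_comm Q c b, polar_comm Q d b, polar_comm Q d c,
        CharTwo.two_eq_zero]
  have := finrank_span_eq_card_and_polarNondegOn_of_polar_perm he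
  rwa [Matrix.range_cons, Matrix.range_cons, Matrix.range_cons_cons_empty, Set.singleton_union,
    Set.singleton_union, Fintype.card_fin] at this

end Polar

section Involution

variable {V : Type*} [AddCommGroup V] [Module (ZMod 2) V] {Q : QuadraticForm (ZMod 2) V}
  {t : V →ₗ[ZMod 2] V} {S : Submodule (ZMod 2) V}

theorem PolarNondegOn.exists_polar_eq_one (hT : PolarNondegOn Q S) {x : V} (hx : x ∈ S)
    (hx0 : x ≠ 0) : ∃ y ∈ S, polar Q x y = 1 := by
  by_contra! h
  exact hx0 (hT x hx fun y hy => (ZMod.eq_zero_or_eq_one _).resolve_right (h y hy))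

structure IsMinimalNondegInvariant (Q : QuadraticForm (ZMod 2) V) (t : V →ₗ[ZMod 2] V)
    (S : Submodule (ZMod 2) V) : Prop where
  nondeg : PolarNondegOn Q S
  apply_mem : ∀ x ∈ S, t x ∈ S
  eq_of_le : ∀ T ≤ S, T ≠ ⊥ → PolarNondegOn Q T → T.map t ≤ T → T = S

namespace IsMinimalNondegInvariant

theorem eq_span {s : Set V} (hS : IsMinimalNondegInvariant Q t S) (hsS : s ⊆ S)
    (hst : ∀ x ∈ s, t x ∈ s) {x : V} (hxs : x ∈ s) (hx0 : x ≠ 0)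
    (hs : PolarNondegOn Q (span (ZMod 2) s)) : S = span (ZMod 2) s := by
  have hs0 : span (ZMod 2) s ≠ ⊥ := (Submodule.ne_bot_iff _).2 ⟨x, subset_span hxs, hx0⟩
  have hst' : (span (ZMod 2) s).map t ≤ span (ZMod 2) s :=
    (map_span_le _ _ _).2 fun y hy => subset_span (hst y hy)
  exact (hS.eq_of_le _ (span_le.2 hsS) hs0 hs hst').symm

theorem eq_span_pair (hS : IsMinimalNondegInvariant Q t S) (ht : ∀ x, t (t x) = x) {u : V}
    (hu : u ∈ S) (hut : polar Q u (t u) = 1) : S = span (ZMod 2) {u, t u} := by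
  refine hS.eq_span ?_ ?_ (Set.mem_insert u _) ?_
    (finrank_eq_two_and_polarNondegOn_span_pair hut).2
  · rintro _ (rfl | rfl)
    exacts [hu, hS.apply_mem _ hu]
  · rintro _ (rfl | rfl) <;> simp [ht]
  · rintro rfl
    simp at hut

theorem polar_map_eq_zero (hS : IsMinimalNondegInvariant Q t S) (ht : ∀ x, t (t x) = x)
    {x : V} (hx : x ∈ S) (hxt : t x ≠ x) (hxx : polar Q x (t x) = 0) {w : V} (hw : w ∈ S) :
    polar Q w (t w) = 0 := by
  refine (ZMod.eq_zero_or_eq_one _).resolve_right fun hww => ?_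
  obtain ⟨a, b, rfl⟩ := mem_span_pair.1 (hS.eq_span_pair ht hw hww ▸ hx)
  rcases ZMod.eq_zero_or_eq_one a with rfl | rfl <;>
    rcases ZMod.eq_zero_or_eq_one b with rfl | rfl <;>
    simp_all [polar_comm Q (t w) w, add_comm]

theorem exists_polar_eq_one_and_polar_map_eq_zero (hS : IsMinimalNondegInvariant Q t S)
    (ht : ∀ x, t (t x) = x) (hiso : ∀ x, Q (t x) = Q x) {v : V} (hv : v ∈ S) (hvt : t v ≠ v) :
    ∃ u ∈ S, polar Q v u = 1 ∧ polar Q (t v) u = 0 := by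
  have hv0 : v + t v ≠ 0 := fun h => hvt <| by
    rwa [← sub_eq_zero, ZModModule.sub_eq_add, add_comm]
  obtain ⟨y, hy, hvy⟩ := hS.nondeg.exists_polar_eq_one (add_mem hv (hS.apply_mem v hv)) hv0
  rw [polar_add_left] at hvy
  rcases ZMod.eq_zero_or_eq_one (polar Q v y) with h0 | h1
  · rw [h0, zero_add] at hvy
    refine ⟨t y, hS.apply_mem y hy, ?_, ?_⟩
    · rwa [← polar_map_map hiso, ht]
    · rw [polar_map_map hiso, h0]
  · refine ⟨y, hy, h1, ?_⟩
    rwa [h1, add_eq_left] at hvy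

theorem exists_singular_polar_eq_one_and_polar_map_eq_zero (hS : IsMinimalNondegInvariant Q t S)
    (ht : ∀ x, t (t x) = x) (hiso : ∀ x, Q (t x) = Q x) {v : V} (hv : v ∈ S) (hQv : Q v = 0)
    (hvt : t v ≠ v) (hvv : polar Q v (t v) = 0) :
    ∃ u ∈ S, Q u = 0 ∧ polar Q v u = 1 ∧ polar Q (t v) u = 0 := by
  obtain ⟨u, hu, hvu, htvu⟩ := hS.exists_polar_eq_one_and_polar_map_eq_zero ht hiso hv hvt
  rcases ZMod.eq_zero_or_eq_one (Q u) with hQu | hQu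
  · exact ⟨u, hu, hQu, hvu, htvu⟩
  · refine ⟨u + v, add_mem hu hv, ?_, ?_, ?_⟩
    · rw [QuadraticMap.map_add Q u v, hQu, hQv, polar_comm, hvu]
      decide
    · rw [polar_add_right, hvu, polar_self_eq_zero, add_zero]
    · rw [polar_add_right, htvu, polar_comm, hvv, add_zero]

theorem finrank_eq_four_and_exists_two_pairs (hS : IsMinimalNondegInvariant Q t S)
    (ht : ∀ x, t (t x) = x) (hiso : ∀ x, Q (t x) = Q x) {v : V} (hv : v ∈ S) (hQv : Q v = 0)
    (hvt : t v ≠ v) (hvv : polar Q v (t v) = 0) :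
    finrank (ZMod 2) S = 4 ∧
      ∃ u₁ ∈ S, ∃ v₁ ∈ S,
        Q u₁ = 0 ∧ Q v₁ = 0 ∧ Q (t u₁) = 0 ∧ Q (t v₁) = 0 ∧
        polar Q v₁ u₁ = 1 ∧ polar Q (t v₁) (t u₁) = 1 ∧
        polar Q v₁ (t u₁) = 0 ∧ polar Q (t v₁) u₁ = 0 ∧
        polar Q v₁ (t v₁) = 0 ∧ polar Q u₁ (t u₁) = 0 ∧
        t v₁ ≠ v₁ ∧ t u₁ ≠ u₁ ∧ S = span (ZMod 2) {u₁, t u₁, v₁, t v₁} := by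
  obtain ⟨u, hu, hQu, hvu, htvu⟩ :=
    hS.exists_singular_polar_eq_one_and_polar_map_eq_zero ht hiso hv hQv hvt hvv
  have huu : polar Q u (t u) = 0 := hS.polar_map_eq_zero ht hv hvt hvv hu
  have hvtu : polar Q v (t u) = 0 := by rw [← polar_map_map hiso, ht, htvu]
  have htvtu : polar Q (t v) (t u) = 1 := by rw [polar_map_map hiso, hvu]
  obtain ⟨hfinrank, hnondeg⟩ := finrank_eq_four_and_polarNondegOn_span_two_pairs
    ((polar_comm Q u v).trans hvu) ((polar_comm Q (t u) (t v)).trans htvtu) huu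
    ((polar_comm Q u (t v)).trans htvu) ((polar_comm Q (t u) v).trans hvtu) hvv
  have hS4 : S = span (ZMod 2) {u, t u, v, t v} := by
    refine hS.eq_span (x := v) ?_ ?_ (by simp) (fun h => hvt (by simp [h])) hnondeg
    · simp [Set.insert_subset_iff, hu, hv, hS.apply_mem]
    · rintro _ (rfl | rfl | rfl | rfl) <;> simp [ht]
  refine ⟨hS4 ▸ hfinrank, u, hu, v, hv, hQu, hQv, by rwa [hiso], by rwa [hiso], hvu, htvtu,
    hvtu, htvu, hvv, huu, hvt, fun h => ?_, hS4⟩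
  rw [h, htvu] at htvtu
  exact zero_ne_one htvtu

theorem polar_map_eq_one_of_not_exists_singular (hS : IsMinimalNondegInvariant Q t S)
    (ht : ∀ x, t (t x) = x) (hiso : ∀ x, Q (t x) = Q x)
    (hno : ¬∃ x ∈ S, Q x = 0 ∧ t x ≠ x ∧ polar Q x (t x) = 0) {v : V} (hv : v ∈ S)
    (hvt : t v ≠ v) : polar Q v (t v) = 1 := by
  refine (ZMod.eq_zero_or_eq_one _).resolve_left fun hvv => ?_
  have hzero : ∀ w ∈ S, polar Q w (t w) = 0 := fun w hw =>
    hS.polar_map_eq_zero ht hv hvt hvv hw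
  have hnonsingular : ∀ w ∈ S, t w ≠ w → Q w = 1 := fun w hw hwt =>
    (ZMod.eq_zero_or_eq_one _).resolve_left fun hQw => hno ⟨w, hw, hQw, hwt, hzero w hw⟩
  obtain ⟨u, hu, hvu, htvu⟩ := hS.exists_polar_eq_one_and_polar_map_eq_zero ht hiso hv hvt
  have hut : t u ≠ u := fun h => by
    rw [← h, polar_map_map hiso, hvu] at htvu
    exact one_ne_zero htvu
  have hw : u + t v ∈ S := add_mem hu (hS.apply_mem v hv)
  have hfix : t (u + t v) = u + t v := by
    by_contra hwt
    refine hno ⟨u + t v, hw, ?_, hwt, hzero _ hw⟩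
    rw [QuadraticMap.map_add Q u (t v), hnonsingular u hu hut, hiso, hnonsingular v hv hvt,
      polar_comm, htvu]
    decide
  have key := congrArg (polar Q u) hfix
  rw [map_add, ht, polar_add_right, polar_add_right, hzero u hu, polar_self_eq_zero,
    polar_comm Q u v, hvu, polar_comm Q u (t v), htvu] at key
  exact absurd key (by decide)

theorem finrank_eq_two_and_exists_pair (hS : IsMinimalNondegInvariant Q t S)
    (ht : ∀ x, t (t x) = x) (hiso : ∀ x, Q (t x) = Q x)
    (hno : ¬∃ x ∈ S, Q x = 0 ∧ t x ≠ x ∧ polar Q x (t x) = 0) {v : V} (hv : v ∈ S)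
    (hvt : t v ≠ v) :
    finrank (ZMod 2) S = 2 ∧
      ∃ u ∈ S, t u ≠ u ∧ polar Q u (t u) = 1 ∧ Q (t u) = Q u ∧ S = span (ZMod 2) {u, t u} := by
  have hvv := hS.polar_map_eq_one_of_not_exists_singular ht hiso hno hv hvt
  have hS2 := hS.eq_span_pair ht hv hvv
  exact ⟨hS2 ▸ (finrank_eq_two_and_polarNondegOn_span_pair hvv).1, v, hv, hvt, hvv, hiso v, hS2⟩

end IsMinimalNondegInvariant

end Involution

theorem mns_subspace_classification_general
    {V : Type*} [AddCommGroup V] [Module (ZMod 2) V]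
    (Q : QuadraticForm (ZMod 2) V)
    (t : V →ₗ[ZMod 2] V)
    (ht2 : t ∘ₗ t = LinearMap.id)
    (hiso : ∀ x, Q (t x) = Q x)
    (Nondeg : Submodule (ZMod 2) V → Prop)
    (hNondeg : ∀ T, Nondeg T ↔ ∀ x ∈ T, (∀ y ∈ T, QuadraticMap.polar Q x y = 0) → x = 0)
    (S : Submodule (ZMod 2) V)
    (hSnd : Nondeg S) (hSt : S.map t ≤ S)
    (hnontriv : ∃ v ∈ S, t v ≠ v)
    (hmin : ∀ T : Submodule (ZMod 2) V,
        T ≤ S → T ≠ ⊥ → Nondeg T → T.map t ≤ T → T = S) :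
    ((∃ v ∈ S, Q v = 0 ∧ t v ≠ v ∧ QuadraticMap.polar Q v (t v) = 0) →
      Module.finrank (ZMod 2) S = 4 ∧
      ∃ u₁ ∈ S, ∃ v₁ ∈ S,
        Q u₁ = 0 ∧ Q v₁ = 0 ∧ Q (t u₁) = 0 ∧ Q (t v₁) = 0 ∧
        QuadraticMap.polar Q v₁ u₁ = 1 ∧
        QuadraticMap.polar Q (t v₁) (t u₁) = 1 ∧
        QuadraticMap.polar Q v₁ (t u₁) = 0 ∧
        QuadraticMap.polar Q (t v₁) u₁ = 0 ∧
        QuadraticMap.polar Q v₁ (t v₁) = 0 ∧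
        QuadraticMap.polar Q u₁ (t u₁) = 0 ∧
        t v₁ ≠ v₁ ∧ t u₁ ≠ u₁ ∧
        S = Submodule.span (ZMod 2) {u₁, t u₁, v₁, t v₁}) ∧
    ((¬ ∃ v ∈ S, Q v = 0 ∧ t v ≠ v ∧ QuadraticMap.polar Q v (t v) = 0) →
      Module.finrank (ZMod 2) S = 2 ∧
      ∃ u ∈ S, t u ≠ u ∧ QuadraticMap.polar Q u (t u) = 1 ∧
        Q (t u) = Q u ∧ S = Submodule.span (ZMod 2) {u, t u}) := by
  have ht : ∀ x, t (t x) = x := LinearMap.congr_fun ht2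
  have hS : IsMinimalNondegInvariant Q t S :=
    ⟨(hNondeg S).1 hSnd, fun x hx => hSt (mem_map_of_mem hx),
      fun T hTS hT0 hT hTt => hmin T hTS hT0 ((hNondeg T).2 hT) hTt⟩
  obtain ⟨v, hv, hvt⟩ := hnontriv
  exact ⟨fun ⟨w, hw, hQw, hwt, hww⟩ =>
      hS.finrank_eq_four_and_exists_two_pairs ht hiso hw hQw hwt hww,
    fun hno => hS.finrank_eq_two_and_exists_pair ht hiso hno hv hvt⟩

/-- Classification of MNS-subspaces (minimal nonsingular `t`-invariant
subspaces on which the involutory isometry `t` acts nontrivially) of a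
quadratic space over `F₂`: they have dimension 2 or 4, with the indicated
standard bases. -/
theorem mns_subspace_classification
    {V : Type*} [AddCommGroup V] [Module (ZMod 2) V] [FiniteDimensional (ZMod 2) V]
    (Q : QuadraticForm (ZMod 2) V)
    (hnd : ∀ x : V, (∀ y : V, QuadraticMap.polar Q x y = 0) → x = 0)
    (t : V →ₗ[ZMod 2] V)
    (ht2 : t ∘ₗ t = LinearMap.id)
    (hiso : ∀ x, Q (t x) = Q x)
    (Nondeg : Submodule (ZMod 2) V → Prop)
    (hNondeg : ∀ T, Nondeg T ↔ ∀ x ∈ T, (∀ y ∈ T, QuadraticMap.polar Q x y = 0) → x = 0)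
    (S : Submodule (ZMod 2) V)
    (hS0 : S ≠ ⊥) (hSnd : Nondeg S) (hSt : S.map t ≤ S)
    (hnontriv : ∃ v ∈ S, t v ≠ v)
    (hmin : ∀ T : Submodule (ZMod 2) V,
        T ≤ S → T ≠ ⊥ → Nondeg T → T.map t ≤ T → T = S) :
    ((∃ v ∈ S, Q v = 0 ∧ t v ≠ v ∧ QuadraticMap.polar Q v (t v) = 0) →
      Module.finrank (ZMod 2) S = 4 ∧
      ∃ u₁ ∈ S, ∃ v₁ ∈ S,
        Q u₁ = 0 ∧ Q v₁ = 0 ∧ Q (t u₁) = 0 ∧ Q (t v₁) = 0 ∧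
        QuadraticMap.polar Q v₁ u₁ = 1 ∧
        QuadraticMap.polar Q (t v₁) (t u₁) = 1 ∧
        QuadraticMap.polar Q v₁ (t u₁) = 0 ∧
        QuadraticMap.polar Q (t v₁) u₁ = 0 ∧
        QuadraticMap.polar Q v₁ (t v₁) = 0 ∧
        QuadraticMap.polar Q u₁ (t u₁) = 0 ∧
        t v₁ ≠ v₁ ∧ t u₁ ≠ u₁ ∧
        S = Submodule.span (ZMod 2) {u₁, t u₁, v₁, t v₁}) ∧
    ((¬ ∃ v ∈ S, Q v = 0 ∧ t v ≠ v ∧ QuadraticMap.polar Q v (t v) = 0) →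
      Module.finrank (ZMod 2) S = 2 ∧
      ∃ u ∈ S, t u ≠ u ∧ QuadraticMap.polar Q u (t u) = 1 ∧
        Q (t u) = Q u ∧ S = Submodule.span (ZMod 2) {u, t u}) :=
  mns_subspace_classification_general Q t ht2 hiso Nondeg hNondeg S hSnd hSt hnontriv hmin
end

section
/- Let d be even and I a maximal totally singular d-dimensional subspace of V = F₂^{2d} (nondegenerate quadratic form of plus type). The set Inv(V, I) of involutions t in the orthogonal group with t trivial on I and on V/I and [V,t] = I is nonempty; more generally, Inv(V,I) is nonempty if and only if d is even. -/
/-!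
Write `t = 1 + N`. The conditions on `t` say that `N` maps `V` onto `I` and kills `I`; since `Q`
vanishes on `I`, `Q (v + N v) = Q v + polar Q v (N v)`, so `t` is an isometry exactly when
`β v w = polar Q v (N w)` is alternating. The kernel of `β` is `(range N)ᗮ = Iᗮ = I`, so `β`
is a nondegenerate alternating form on the `d`-dimensional space `V ⧸ I`, forcing `d` to be even.
Conversely, nondegeneracy of the polar form realises any alternating form on `V ⧸ I` (e.g. the
standard symplectic one, which exists in even dimension) as such a `β`, and `1 + N` is an
involution because `N² = 0` in characteristic `2`.
-/

open Module LinearMap QuadraticMap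
open LinearMap (BilinForm)

theorem LinearMap.involutive_id_add_of_range_le_ker {R M : Type*} [Ring R] [CharP R 2]
    [AddCommGroup M] [Module R M] {N : M →ₗ[R] M} (h : range N ≤ ker N) :
    Function.Involutive (LinearMap.id + N : M →ₗ[R] M) := fun v => by
  have hNN : N (N v) = 0 := h (mem_range_self N v)
  simp [hNN, add_assoc, ← two_smul R (N v), CharTwo.two_eq_zero]

namespace LinearMap.BilinForm

theorem ker_compl₂_eq_orthogonal_range {R M : Type*} [CommRing R] [AddCommGroup M] [Module R M]
    {B : BilinForm R M} (hB : B.IsRefl) (N : M →ₗ[R] M) :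
    ker (B.compl₂ N) = B.orthogonal (range N) := by
  ext v
  simp only [mem_ker, mem_orthogonal_iff, mem_range, forall_exists_index, forall_apply_eq_imp_iff,
    LinearMap.ext_iff, compl₂_apply]
  exact forall_congr' fun w => hB.eq_iff

variable {K V : Type*} [Field K] [AddCommGroup V] [Module K V] {B : BilinForm K V}

namespace IsAlt

protected theorem restrict (hB : B.IsAlt) (W : Submodule K V) : (B.restrict W).IsAlt :=
  fun w => hB w

theorem eq_zero_of_apply_pair_eq_zero (hB : B.IsAlt) {x y : V} (hxy : B x y ≠ 0) {a b : K}
    (hx : B (a • x + b • y) x = 0) (hy : B (a • x + b • y) y = 0) : a = 0 ∧ b = 0 := by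
  have hyx : B y x ≠ 0 := fun h => hxy (hB.isRefl _ _ h)
  simp only [map_add, map_smul, LinearMap.add_apply, LinearMap.smul_apply, smul_eq_mul,
    hB.self_eq_zero, mul_zero, zero_add, add_zero, mul_eq_zero, hxy, hyx, or_false] at hx hy
  exact ⟨hy, hx⟩

theorem finrank_span_pair (hB : B.IsAlt) {x y : V} (hxy : B x y ≠ 0) :
    finrank K (Submodule.span K {x, y}) = 2 := by
  have hli : LinearIndependent K ![x, y] := LinearIndependent.pair_iff.2 fun a b h =>
    hB.eq_zero_of_apply_pair_eq_zero hxy (by simp [h]) (by simp [h])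
  rw [← Matrix.range_cons_cons_empty x y ![], finrank_span_eq_card hli, Fintype.card_fin]

theorem nondegenerate_restrict_span_pair (hB : B.IsAlt) {x y : V} (hxy : B x y ≠ 0) :
    (B.restrict (Submodule.span K {x, y})).Nondegenerate := by
  refine (hB.restrict _).isRefl.nondegenerate_iff_separatingLeft.2 ?_
  rintro ⟨u, hu⟩ h
  obtain ⟨a, b, rfl⟩ := Submodule.mem_span_pair.1 hu
  obtain ⟨rfl, rfl⟩ := hB.eq_zero_of_apply_pair_eq_zero hxy
    (h ⟨x, Submodule.subset_span (by simp)⟩) (h ⟨y, Submodule.subset_span (by simp)⟩)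
  simp

theorem even_finrank [FiniteDimensional K V] (hB : B.IsAlt) (hnd : B.Nondegenerate) :
    Even (finrank K V) := by
  induction hn : finrank K V using Nat.strong_induction_on generalizing V with
  | _ n ih =>
  rcases n.eq_zero_or_pos with rfl | hpos
  · exact .zero
  have : Nontrivial V := nontrivial_of_finrank_pos (R := K) (hn ▸ hpos)
  obtain ⟨x, hx⟩ := exists_ne (0 : V)
  obtain ⟨y, hxy⟩ : ∃ y, B x y ≠ 0 := by
    by_contra! h
    exact hx (hnd.1 x h)
  set U := Submodule.span K {x, y}
  have hU := hB.nondegenerate_restrict_span_pair hxy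
  have hperp : (B.restrict (B.orthogonal U)).Nondegenerate := by
    refine B.nondegenerate_restrict_of_disjoint_orthogonal hB.isRefl ?_
    rw [orthogonal_orthogonal hnd hB.isRefl]
    exact (isCompl_orthogonal_of_restrict_nondegenerate hB.isRefl hU).disjoint.symm
  have hrank : finrank K (B.orthogonal U) = n - 2 := by
    rw [finrank_orthogonal hnd, hn, hB.finrank_span_pair hxy]
  have h2 : 2 ≤ n := hn ▸ hB.finrank_span_pair hxy ▸ U.finrank_le
  obtain ⟨k, hk⟩ := ih (n - 2) (by omega) (hB.restrict _) hperp hrank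
  exact ⟨k + 1, by omega⟩

theorem even_finrank_range [FiniteDimensional K V] (hB : B.IsAlt) :
    Even (finrank K (range B)) := by
  obtain ⟨W, hW⟩ := (ker B).exists_isCompl
  have hker : ker (B.restrict W) = ⊥ := by
    rw [ker_restrict_eq_of_codisjoint hW.symm.codisjoint fun x _ y hy =>
      hB.isRefl _ _ (by rw [mem_ker.1 hy]; rfl)]
    exact Submodule.disjoint_iff_comap_eq_bot.1 hW.symm.disjoint
  have hnd : (B.restrict W).Nondegenerate :=
    (hB.restrict W).isRefl.nondegenerate_iff_separatingLeft.2 (separatingLeft_iff_ker_eq_bot.2 hker)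
  have := Submodule.finrank_add_eq_of_isCompl hW
  have := B.finrank_range_add_finrank_ker
  convert (hB.restrict W).even_finrank hnd using 1
  omega

end IsAlt

theorem exists_isAlt_nondegenerate_of_even [FiniteDimensional K V] (h : Even (finrank K V)) :
    ∃ B : BilinForm K V, B.IsAlt ∧ B.Nondegenerate := by
  obtain ⟨m, hm⟩ := h
  let b := (Module.finBasisOfFinrankEq K V hm).reindex finSumFinEquiv.symm
  refine ⟨Matrix.toBilin b (Matrix.J (Fin m) K), fun x => ?_, ?_⟩
  · simp [Matrix.toBilin_apply, Matrix.J, Fintype.sum_sum_type, Matrix.one_apply, mul_comm]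
  · rw [Matrix.nondegenerate_toBilin_iff]
    refine Matrix.nondegenerate_of_det_ne_zero fun h => ?_
    simpa [h] using Matrix.J_det_mul_J_det (Fin m) K

theorem range_eq_iff_ker_compl₂_eq [FiniteDimensional K V] (hB : B.Nondegenerate)
    (hB₀ : B.IsRefl) {I : Submodule K V} (hI : B.orthogonal I = I) {N : V →ₗ[K] V} :
    range N = I ↔ ker (B.compl₂ N) = I := by
  rw [ker_compl₂_eq_orthogonal_range hB₀]
  refine ⟨fun h => h ▸ hI, fun h => ?_⟩
  rw [← orthogonal_orthogonal hB hB₀ (range N), h, hI]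

end LinearMap.BilinForm

namespace QuadraticMap

section CommRing

variable {R M N : Type*} [CommRing R] [AddCommGroup M] [Module R M] [AddCommGroup N] [Module R N]

theorem map_add_eq_self_iff (Q : QuadraticMap R M N) {v w : M} (hw : Q w = 0) :
    Q (v + w) = Q v ↔ polar Q v w = 0 := by
  rw [QuadraticMap.map_add (⇑Q) v w, hw, add_zero, add_eq_left]

theorem polar_eq_zero_of_mem {Q : QuadraticMap R M N} {I : Submodule R M}
    (hI : ∀ x ∈ I, Q x = 0) {x y : M} (hx : x ∈ I) (hy : y ∈ I) : polar Q x y = 0 := by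
  rw [polar, hI _ (I.add_mem hx hy), hI x hx, hI y hy, sub_zero, sub_zero]

theorem isSymm_polarBilin (Q : QuadraticForm R M) : (polarBilin Q).IsSymm :=
  ⟨polar_comm Q⟩

theorem isAlt_polarBilin_compl₂_iff {Q : QuadraticForm R M} {I : Submodule R M}
    (hI : ∀ x ∈ I, Q x = 0) {N : M →ₗ[R] M} (hN : ∀ v, N v ∈ I) :
    BilinForm.IsAlt ((polarBilin Q).compl₂ N) ↔ ∀ v, Q (v + N v) = Q v :=
  forall_congr' fun v => (map_add_eq_self_iff Q (hI _ (hN v))).symm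

end CommRing

variable {K V : Type*} [Field K] [AddCommGroup V] [Module K V]

/-- The set `Inv(V, I)` of the paper; `[V, t]` is the range of `t - 1`. -/
def trivialInvolutions (Q : QuadraticForm K V) (I : Submodule K V) : Set (V ≃ₗ[K] V) :=
  {t | (∀ x, t (t x) = x) ∧ (∀ x, Q (t x) = Q x) ∧ (∀ x ∈ I, t x = x) ∧ (∀ v, t v - v ∈ I) ∧
    range (t.toLinearMap - LinearMap.id) = I}

variable [FiniteDimensional K V] {Q : QuadraticForm K V} {I : Submodule K V}

theorem orthogonal_polarBilin_eq_self (hQ : (polarBilin Q).Nondegenerate)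
    (hI : ∀ x ∈ I, Q x = 0) (hdim : finrank K V = 2 * finrank K I) :
    BilinForm.orthogonal (polarBilin Q) I = I := by
  have hle : I ≤ BilinForm.orthogonal (polarBilin Q) I := fun x hx y hy =>
    polar_eq_zero_of_mem hI hy hx
  refine (Submodule.eq_of_le_of_finrank_le hle ?_).symm
  rw [BilinForm.finrank_orthogonal hQ]
  omega

section

variable (hQ : (polarBilin Q).Nondegenerate) (hI : ∀ x ∈ I, Q x = 0)
  (hdim : finrank K V = 2 * finrank K I)
include hQ hI hdim

theorem even_finrank_of_isAlt_polarBilin_compl₂ {N : V →ₗ[K] V}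
    (hN : BilinForm.IsAlt ((polarBilin Q).compl₂ N)) (hrange : range N = I) :
    Even (finrank K I) := by
  have hker : ker ((polarBilin Q).compl₂ N) = I :=
    (BilinForm.range_eq_iff_ker_compl₂_eq hQ (isSymm_polarBilin Q).isRefl
      (orthogonal_polarBilin_eq_self hQ hI hdim)).1 hrange
  have hrank := finrank_range_add_finrank_ker ((polarBilin Q).compl₂ N)
  rw [hker] at hrank
  convert BilinForm.IsAlt.even_finrank_range hN using 1
  omega

theorem exists_isAlt_polarBilin_compl₂_of_even (h : Even (finrank K I)) :
    ∃ N : V →ₗ[K] V, BilinForm.IsAlt ((polarBilin Q).compl₂ N) ∧ range N = I ∧ I ≤ ker N := by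
  have hquot : finrank K (V ⧸ I) = finrank K I := by
    have := I.finrank_quotient_add_finrank
    omega
  obtain ⟨ω, hωalt, hω⟩ := BilinForm.exists_isAlt_nondegenerate_of_even (hquot ▸ h)
  set β := ω.compl₁₂ I.mkQ I.mkQ
  have hker : ker β = I := by
    ext v
    refine ⟨fun hv => (Submodule.Quotient.mk_eq_zero I).1 (hω.1 _ fun w => ?_), fun hv => ?_⟩
    · obtain ⟨w, rfl⟩ := I.mkQ_surjective w
      exact LinearMap.congr_fun (mem_ker.1 hv) w
    · ext w
      simp [β, (Submodule.Quotient.mk_eq_zero I).2 hv]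
  -- Nondegeneracy of the polar form lets every bilinear form be written as `polar Q v (N w)`.
  have hQ' := BilinForm.Nondegenerate.flip hQ
  set N := BilinForm.symmCompOfNondegenerate β.flip (polarBilin Q).flip hQ'
  have hN : (polarBilin Q).compl₂ N = β := by
    ext v w
    exact BilinForm.symmCompOfNondegenerate_left_apply β.flip hQ' v w
  refine ⟨N, hN ▸ fun v => hωalt _, ?_, fun x hx => hQ.2 _ fun v => ?_⟩
  · exact (BilinForm.range_eq_iff_ker_compl₂_eq hQ (isSymm_polarBilin Q).isRefl
      (orthogonal_polarBilin_eq_self hQ hI hdim)).2 (hN ▸ hker)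
  · rw [← compl₂_apply, hN]
    simp [β, (Submodule.Quotient.mk_eq_zero I).2 hx]

theorem nonempty_trivialInvolutions_iff_even [CharP K 2] :
    (trivialInvolutions Q I).Nonempty ↔ Even (finrank K I) := by
  constructor
  · rintro ⟨t, -, hQt, -, -, hrange⟩
    have hsub : ∀ v, v + (t.toLinearMap - LinearMap.id : V →ₗ[K] V) v = t v := fun v => by
      simp
    refine even_finrank_of_isAlt_polarBilin_compl₂ hQ hI hdim ?_ hrange
    exact (isAlt_polarBilin_compl₂_iff hI fun v => hrange ▸ mem_range_self _ v).2
      fun v => by rw [hsub, hQt]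
  · intro h
    obtain ⟨N, hNalt, hrange, hker⟩ := exists_isAlt_polarBilin_compl₂_of_even hQ hI hdim h
    have hNI : ∀ v, N v ∈ I := fun v => hrange ▸ mem_range_self N v
    have hinv := involutive_id_add_of_range_le_ker (hrange.trans_le hker)
    set t := LinearEquiv.ofInvolutive _ hinv
    have ht : ∀ v, t v = v + N v := fun v => rfl
    have hsub : t.toLinearMap - LinearMap.id = N := by
      ext v
      simp [ht]
    refine ⟨t, hinv, fun x => ?_, fun x hx => ?_, fun v => ?_, hsub ▸ hrange⟩
    · rw [ht]
      exact (isAlt_polarBilin_compl₂_iff hI hNI).1 hNalt x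
    · simp [ht, mem_ker.1 (hker hx)]
    · simpa [ht] using hNI v

end

end QuadraticMap

theorem inv_V_I_nonempty_iff_even_general
    (d : ℕ)
    (Q : QuadraticForm (ZMod 2) (Fin (2 * d) → ZMod 2))
    (hnd : ∀ x, (∀ y, QuadraticMap.polar Q x y = 0) → x = 0)
    (I : Submodule (ZMod 2) (Fin (2 * d) → ZMod 2))
    (hIdim : Module.finrank (ZMod 2) I = d)
    (hIsing : ∀ x ∈ I, Q x = 0) :
    (∃ t : (Fin (2 * d) → ZMod 2) ≃ₗ[ZMod 2] (Fin (2 * d) → ZMod 2),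
        (∀ x, t (t x) = x) ∧
        (∀ x, Q (t x) = Q x) ∧
        (∀ x ∈ I, t x = x) ∧
        (∀ v, t v - v ∈ I) ∧
        LinearMap.range (t.toLinearMap - LinearMap.id) = I) ↔ Even d := by
  have hQ : (polarBilin Q).Nondegenerate :=
    (isSymm_polarBilin Q).isRefl.nondegenerate_iff_separatingLeft.2 hnd
  have hdim : finrank (ZMod 2) (Fin (2 * d) → ZMod 2) = 2 * finrank (ZMod 2) I := by
    rw [finrank_fin_fun, hIdim]
  exact (nonempty_trivialInvolutions_iff_even hQ hIsing hdim).trans (by rw [hIdim])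

/-- Let `V = F₂^(2d)` with a nondegenerate quadratic form of plus type and
`I` a maximal totally singular `d`-dimensional subspace.  The set
`Inv(V, I)` of involutory isometries `t` which are trivial on `I` and on
`V/I` and satisfy `[V,t] = I` is nonempty if and only if `d` is even. -/
theorem inv_V_I_nonempty_iff_even
    (d : ℕ) (hd : 1 ≤ d)
    (Q : QuadraticForm (ZMod 2) (Fin (2 * d) → ZMod 2))
    (hnd : ∀ x, (∀ y, QuadraticMap.polar Q x y = 0) → x = 0)
    (I : Submodule (ZMod 2) (Fin (2 * d) → ZMod 2))
    (hIdim : Module.finrank (ZMod 2) I = d)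
    (hIsing : ∀ x ∈ I, Q x = 0) :
    (∃ t : (Fin (2 * d) → ZMod 2) ≃ₗ[ZMod 2] (Fin (2 * d) → ZMod 2),
        (∀ x, t (t x) = x) ∧
        (∀ x, Q (t x) = Q x) ∧
        (∀ x ∈ I, t x = x) ∧
        (∀ v, t v - v ∈ I) ∧
        LinearMap.range (t.toLinearMap - LinearMap.id) = I) ↔ Even d :=
  inv_V_I_nonempty_iff_even_general d Q hnd I hIdim hIsing
end

section
/- Let L be an even integral lattice of rank 3 whose discriminant group L*/L is an elementary abelian 2-group, and suppose the set Φ of roots (norm-2 vectors) of L spans L ⊗ ℚ. If Φ contains two linearly independent non-orthogonal roots, then the root system of L has type A₃ or A₂A₁, and in both cases the discriminant group fails to be elementary abelian 2; hence Φ is of type A₁³ and L is the orthogonal sum of three rank-1 lattices each generated by a root. -/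
/-!
Two linearly independent roots `r, s` of a positive definite even lattice satisfy
`B r s ∈ {-1, 0, 1}` (strict Cauchy–Schwarz). Suppose `B r s = -1`. Since the roots span, some
root `t` lies outside the plane of `r, s`, and it pairs with `r`, `s`, `r + s` in `{-1, 0, 1}`.
Reading off signs, the roots `r, s, -(r + s), ±t` contain either an `A₃` chain `p - q - u` or an
`A₂ ⊥ A₁` configuration. Writing a lattice vector `y` through its pairings with these three
roots and using that `B y y` is even shows that the weight `x = (3p + 2q + u)/4`, resp.
`x = (p - q)/3`, pairs integrally with `L`; then `2x ∈ L`, yet `B x (2x)` is `3/2`, resp. `4/3`.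
So independent roots are orthogonal. Three independent roots `rᵢ` then have `B y y = ∑ aᵢ² / 2`
with `aᵢ = B rᵢ y`, and evenness forces every `aᵢ` to be even, i.e. `y ∈ span ℤ {r₁, r₂, r₃}`.
-/

/-- The quadratic form is `4 B y y` in the pairings `(a, c, d)` of `y` with an `A₃` chain. -/
theorem Int.four_dvd_of_eight_dvd_a3Norm (a c d : ℤ)
    (h : 8 ∣ 3 * a ^ 2 + 4 * c ^ 2 + 3 * d ^ 2 + 4 * a * c + 2 * a * d + 4 * c * d) :
    4 ∣ 3 * a + 2 * c + d := by
  have key : ∀ a c d : ZMod 8,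
      3 * a ^ 2 + 4 * c ^ 2 + 3 * d ^ 2 + 4 * a * c + 2 * a * d + 4 * c * d = 0 →
        2 * (3 * a + 2 * c + d) = 0 := by decide
  have h8 := (ZMod.intCast_zmod_eq_zero_iff_dvd _ 8).2 h
  push_cast at h8
  have h2 := (ZMod.intCast_zmod_eq_zero_iff_dvd (2 * (3 * a + 2 * c + d)) 8).1
    (by push_cast; exact key a c d h8)
  omega

theorem Int.three_dvd_sub_of_three_dvd_sq_add_mul_add_sq (a c : ℤ)
    (h : 3 ∣ a ^ 2 + a * c + c ^ 2) : 3 ∣ a - c :=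
  Int.prime_three.dvd_of_dvd_pow (n := 2) (by
    have : (a - c) ^ 2 = a ^ 2 + a * c + c ^ 2 - 3 * (a * c) := by ring
    rw [this]; exact dvd_sub h (dvd_mul_right _ _))

theorem Int.two_dvd_of_four_dvd_sq_add_sq_add_sq (a c d : ℤ) (h : 4 ∣ a ^ 2 + c ^ 2 + d ^ 2) :
    2 ∣ a ∧ 2 ∣ c ∧ 2 ∣ d := by
  have key : ∀ a c d : ZMod 4, a ^ 2 + c ^ 2 + d ^ 2 = 0 →
      2 * a = 0 ∧ 2 * c = 0 ∧ 2 * d = 0 := by decide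
  have h4 := (ZMod.intCast_zmod_eq_zero_iff_dvd _ 4).2 h
  push_cast at h4
  obtain ⟨ha, hc, hd⟩ := key a c d h4
  have ha := (ZMod.intCast_zmod_eq_zero_iff_dvd (2 * a) 4).1 (by push_cast; exact ha)
  have hc := (ZMod.intCast_zmod_eq_zero_iff_dvd (2 * c) 4).1 (by push_cast; exact hc)
  have hd := (ZMod.intCast_zmod_eq_zero_iff_dvd (2 * d) 4).1 (by push_cast; exact hd)
  omega

theorem Submodule.span_finset_ne_top {K V : Type*} [DivisionRing K] [AddCommGroup V] [Module K V]
    (s : Finset V) (hs : s.card < Module.finrank K V) :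
    Submodule.span K (s : Set V) ≠ ⊤ := by
  intro h
  have := finrank_span_finset_le_card (R := K) s
  rw [Set.finrank, h, finrank_top] at this
  omega

theorem exists_notMem_of_span_eq_top {K V : Type*} [Semiring K] [AddCommGroup V] [Module K V]
    {S : Set V} (hS : Submodule.span K S = ⊤) {W : Submodule K V} (hW : W ≠ ⊤) :
    ∃ t ∈ S, t ∉ W := by
  by_contra! h
  exact hW (top_unique (hS ▸ Submodule.span_le.2 h))

namespace LinearMap.BilinForm

variable {K V : Type*} [Field K] [AddCommGroup V] [Module K V] {B : LinearMap.BilinForm K V}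

open Matrix in
variable (B) in
theorem linearIndependent_of_det_ne_zero {n : Type*} [Fintype n] [DecidableEq n] {v : n → V}
    (h : (Matrix.of fun i j => B (v i) (v j)).det ≠ 0) : LinearIndependent K v := by
  rw [Fintype.linearIndependent_iff]
  intro g hg
  have hG : (Matrix.of fun i j => B (v i) (v j)) *ᵥ g = 0 := by
    ext i
    simpa [Matrix.mulVec, dotProduct, mul_comm] using congrArg (B (v i)) hg
  exact congrFun (Matrix.eq_zero_of_mulVec_eq_zero h hG)

variable (B) in
theorem span_range_eq_top_of_det_ne_zero {n : Type*} [Fintype n] [DecidableEq n] [Nonempty n]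
    {v : n → V} (hcard : Fintype.card n = Module.finrank K V)
    (h : (Matrix.of fun i j => B (v i) (v j)).det ≠ 0) :
    Submodule.span K (Set.range v) = ⊤ :=
  (linearIndependent_of_det_ne_zero B h).span_eq_top_of_card_eq_finrank hcard

theorem eq_of_forall_apply_eq_of_span_eq_top [Preorder K] (hpos : ∀ v : V, v ≠ 0 → 0 < B v v)
    {ι : Type*} {v : ι → V} (hv : Submodule.span K (Set.range v) = ⊤) {x y : V}
    (h : ∀ i, B (v i) x = B (v i) y) : x = y := by
  have hflip : B.flip x = B.flip y := LinearMap.ext_on_range hv h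
  have hzero : B (x - y) (x - y) = 0 := by
    have hxy : B (x - y) x = B (x - y) y := LinearMap.congr_fun hflip (x - y)
    rw [map_sub, hxy, sub_self]
  by_contra hne
  exact (hpos _ (sub_ne_zero.2 hne)).ne' hzero

theorem apply_sq_lt_of_notMem_span_singleton [LinearOrder K] [IsStrictOrderedRing K]
    (hsymm : ∀ x y : V, B x y = B y x)
    (hpos : ∀ v : V, v ≠ 0 → 0 < B v v) {x y : V} (hx : x ≠ 0) (hy : y ∉ K ∙ x) :
    B x y ^ 2 < B x x * B y y := by
  have hxx := hpos x hx
  have hne : B x x • y - B x y • x ≠ 0 := by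
    intro h
    refine hy (Submodule.mem_span_singleton.2 ⟨B x y / B x x, ?_⟩)
    rw [sub_eq_zero] at h
    rw [div_eq_inv_mul, mul_smul, ← h, smul_smul, inv_mul_cancel₀ hxx.ne', one_smul]
  have hpos' := hpos _ hne
  simp only [map_sub, map_smul, LinearMap.sub_apply, LinearMap.smul_apply, smul_eq_mul,
    hsymm y x] at hpos'
  nlinarith

end LinearMap.BilinForm

open LinearMap.BilinForm

section Lattice

variable {V : Type*} [AddCommGroup V] [Module ℚ V] {B : LinearMap.BilinForm ℚ V}

theorem apply_root_eq_neg_one_or_zero_or_one (hsymm : ∀ x y : V, B x y = B y x)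
    (hpos : ∀ v : V, v ≠ 0 → 0 < B v v) {r s : V} (hrr : B r r = 2) (hss : B s s = 2)
    (hs : s ∉ ℚ ∙ r) (hrs : ∃ n : ℤ, B r s = n) : B r s = -1 ∨ B r s = 0 ∨ B r s = 1 := by
  obtain ⟨n, hn⟩ := hrs
  have hr : r ≠ 0 := by rintro rfl; simp at hrr
  have hlt := apply_sq_lt_of_notMem_span_singleton hsymm hpos hr hs
  rw [hrr, hss, hn] at hlt
  have hn4 : n ^ 2 < 4 := by exact_mod_cast (by linarith : (n : ℚ) ^ 2 < 4)
  have : -1 ≤ n ∧ n ≤ 1 := ⟨by nlinarith, by nlinarith⟩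
  rcases (by omega : n = -1 ∨ n = 0 ∨ n = 1) with rfl | rfl | rfl <;> simp [hn]

structure IsEvenLattice (B : LinearMap.BilinForm ℚ V) (L : Submodule ℤ V) : Prop where
  integral : ∀ x ∈ L, ∀ y ∈ L, ∃ n : ℤ, B x y = n
  even : ∀ x ∈ L, ∃ n : ℤ, B x x = 2 * n

variable {L : Submodule ℤ V}

theorem exists_int_two_mul_apply_self_of_two_smul_mem
    (hdisc : ∀ x : V, (∀ y ∈ L, ∃ n : ℤ, B x y = n) → (2 : ℚ) • x ∈ L) {x : V}
    (hx : ∀ y ∈ L, ∃ n : ℤ, B x y = n) : ∃ n : ℤ, 2 * B x x = n := by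
  obtain ⟨n, hn⟩ := hx _ (hdisc x hx)
  exact ⟨n, by rwa [map_smul, smul_eq_mul] at hn⟩

namespace IsEvenLattice

theorem exists_int_apply_a3_weight (hsymm : ∀ x y : V, B x y = B y x)
    (hpos : ∀ v : V, v ≠ 0 → 0 < B v v) (hdim : Module.finrank ℚ V = 3)
    (hL : IsEvenLattice B L) {p q u : V} (hp : p ∈ L) (hq : q ∈ L) (hu : u ∈ L)
    (hpp : B p p = 2) (hqq : B q q = 2) (huu : B u u = 2)
    (hpq : B p q = -1) (hqu : B q u = -1) (hpu : B p u = 0) {y : V} (hy : y ∈ L) :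
    ∃ k : ℤ, B ((3 / 4 : ℚ) • p + (1 / 2 : ℚ) • q + (1 / 4 : ℚ) • u) y = k := by
  have hqp : B q p = -1 := (hsymm q p).trans hpq
  have huq : B u q = -1 := (hsymm u q).trans hqu
  have hup : B u p = 0 := (hsymm u p).trans hpu
  have hspan : Submodule.span ℚ (Set.range ![p, q, u]) = ⊤ :=
    span_range_eq_top_of_det_ne_zero B (by simp [hdim])
      (by simp [Matrix.det_fin_three, hpp, hqq, huu, hpq, hqp, hqu, huq, hpu, hup]; norm_num)
  obtain ⟨a, ha⟩ := hL.integral p hp y hy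
  obtain ⟨c, hc⟩ := hL.integral q hq y hy
  obtain ⟨d, hd⟩ := hL.integral u hu y hy
  obtain ⟨n, hn⟩ := hL.even y hy
  have hexp : (4 : ℚ) • y = (3 * B p y + 2 * B q y + B u y) • p
      + (2 * B p y + 4 * B q y + 2 * B u y) • q + (B p y + 2 * B q y + 3 * B u y) • u := by
    refine eq_of_forall_apply_eq_of_span_eq_top hpos hspan fun i => ?_
    fin_cases i <;> simp [hpp, hqq, huu, hpq, hqp, hqu, huq, hpu, hup] <;> ring
  have hnorm := congrArg (B y) hexp
  simp only [map_add, map_smul, smul_eq_mul, hsymm y p, hsymm y q, hsymm y u, ha, hc, hd,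
    hn] at hnorm
  have h8 : ((3 * a ^ 2 + 4 * c ^ 2 + 3 * d ^ 2 + 4 * a * c + 2 * a * d + 4 * c * d : ℤ) : ℚ)
      = (8 * n : ℤ) := by
    push_cast
    linear_combination -hnorm
  obtain ⟨k, hk⟩ := Int.four_dvd_of_eight_dvd_a3Norm a c d ⟨n, by exact_mod_cast h8⟩
  refine ⟨k, ?_⟩
  have hk' : ((3 * a + 2 * c + d : ℤ) : ℚ) = 4 * k := by exact_mod_cast hk
  push_cast at hk'
  simp only [map_add, map_smul, LinearMap.add_apply, LinearMap.smul_apply, smul_eq_mul, ha, hc, hd]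
  linarith

theorem false_of_a3 (hsymm : ∀ x y : V, B x y = B y x)
    (hpos : ∀ v : V, v ≠ 0 → 0 < B v v) (hdim : Module.finrank ℚ V = 3)
    (hL : IsEvenLattice B L) (hdisc : ∀ x : V, (∀ y ∈ L, ∃ n : ℤ, B x y = n) → (2 : ℚ) • x ∈ L)
    {p q u : V} (hp : p ∈ L) (hq : q ∈ L) (hu : u ∈ L)
    (hpp : B p p = 2) (hqq : B q q = 2) (huu : B u u = 2)
    (hpq : B p q = -1) (hqu : B q u = -1) (hpu : B p u = 0) : False := by
  obtain ⟨m, hm⟩ := exists_int_two_mul_apply_self_of_two_smul_mem hdisc fun _ hy =>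
    exists_int_apply_a3_weight hsymm hpos hdim hL hp hq hu hpp hqq huu hpq hqu hpu hy
  simp only [map_add, map_smul, LinearMap.add_apply, LinearMap.smul_apply, smul_eq_mul,
    hpp, hqq, huu, hpq, hqu, hpu, hsymm q p, hsymm u q, hsymm u p] at hm
  have h3 : ((2 * m : ℤ) : ℚ) = 3 := by push_cast; linarith
  have : 2 * m = 3 := by exact_mod_cast h3
  omega

theorem exists_int_apply_a2_weight (hsymm : ∀ x y : V, B x y = B y x)
    (hpos : ∀ v : V, v ≠ 0 → 0 < B v v) (hdim : Module.finrank ℚ V = 3)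
    (hL : IsEvenLattice B L) {p q u : V} (hp : p ∈ L) (hq : q ∈ L) (hu : u ∈ L)
    (hpp : B p p = 2) (hqq : B q q = 2) (huu : B u u = 2)
    (hpq : B p q = -1) (hpu : B p u = 0) (hqu : B q u = 0) {y : V} (hy : y ∈ L) :
    ∃ k : ℤ, B ((1 / 3 : ℚ) • p - (1 / 3 : ℚ) • q) y = k := by
  have hqp : B q p = -1 := (hsymm q p).trans hpq
  have hup : B u p = 0 := (hsymm u p).trans hpu
  have huq : B u q = 0 := (hsymm u q).trans hqu
  have hspan : Submodule.span ℚ (Set.range ![p, q, u]) = ⊤ :=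
    span_range_eq_top_of_det_ne_zero B (by simp [hdim])
      (by simp [Matrix.det_fin_three, hpp, hqq, huu, hpq, hqp, hqu, huq, hpu, hup]; norm_num)
  obtain ⟨a, ha⟩ := hL.integral p hp y hy
  obtain ⟨c, hc⟩ := hL.integral q hq y hy
  obtain ⟨d, hd⟩ := hL.integral u hu y hy
  obtain ⟨n, hn⟩ := hL.even y hy
  have hexp : (6 : ℚ) • y = (2 * (2 * B p y + B q y)) • p + (2 * (B p y + 2 * B q y)) • q
      + (3 * B u y) • u := by
    refine eq_of_forall_apply_eq_of_span_eq_top hpos hspan fun i => ?_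
    fin_cases i <;> simp [hpp, hqq, huu, hpq, hqp, hqu, huq, hpu, hup] <;> ring
  have hnorm := congrArg (B y) hexp
  simp only [map_add, map_smul, smul_eq_mul, hsymm y p, hsymm y q, hsymm y u, ha, hc, hd,
    hn] at hnorm
  have h3 : ((4 * (a ^ 2 + a * c + c ^ 2) : ℤ) : ℚ) = (3 * (4 * n - d ^ 2) : ℤ) := by
    push_cast
    linear_combination -hnorm
  have h3' : 3 ∣ 4 * (a ^ 2 + a * c + c ^ 2) := ⟨4 * n - d ^ 2, by exact_mod_cast h3⟩
  obtain ⟨k, hk⟩ := Int.three_dvd_sub_of_three_dvd_sq_add_mul_add_sq a c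
    ((Int.prime_three.dvd_mul.1 h3').resolve_left (by norm_num))
  refine ⟨k, ?_⟩
  have hk' : ((a - c : ℤ) : ℚ) = 3 * k := by exact_mod_cast hk
  push_cast at hk'
  simp only [map_sub, map_smul, LinearMap.sub_apply, LinearMap.smul_apply, smul_eq_mul, ha, hc]
  linarith

theorem false_of_a2a1 (hsymm : ∀ x y : V, B x y = B y x)
    (hpos : ∀ v : V, v ≠ 0 → 0 < B v v) (hdim : Module.finrank ℚ V = 3)
    (hL : IsEvenLattice B L) (hdisc : ∀ x : V, (∀ y ∈ L, ∃ n : ℤ, B x y = n) → (2 : ℚ) • x ∈ L)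
    {p q u : V} (hp : p ∈ L) (hq : q ∈ L) (hu : u ∈ L)
    (hpp : B p p = 2) (hqq : B q q = 2) (huu : B u u = 2)
    (hpq : B p q = -1) (hpu : B p u = 0) (hqu : B q u = 0) : False := by
  obtain ⟨m, hm⟩ := exists_int_two_mul_apply_self_of_two_smul_mem hdisc fun _ hy =>
    exists_int_apply_a2_weight hsymm hpos hdim hL hp hq hu hpp hqq huu hpq hpu hqu hy
  simp only [map_sub, map_smul, LinearMap.sub_apply, LinearMap.smul_apply, smul_eq_mul,
    hpp, hqq, hpq, hsymm q p] at hm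
  have h4 : ((3 * m : ℤ) : ℚ) = 4 := by push_cast; linarith
  have : 3 * m = 4 := by exact_mod_cast h4
  omega

theorem false_of_a2 (hsymm : ∀ x y : V, B x y = B y x)
    (hpos : ∀ v : V, v ≠ 0 → 0 < B v v) (hdim : Module.finrank ℚ V = 3)
    (hL : IsEvenLattice B L) (hdisc : ∀ x : V, (∀ y ∈ L, ∃ n : ℤ, B x y = n) → (2 : ℚ) • x ∈ L)
    (hroots : Submodule.span ℚ {r : V | r ∈ L ∧ B r r = 2} = ⊤)
    {r s : V} (hr : r ∈ L) (hs : s ∈ L) (hrr : B r r = 2) (hss : B s s = 2)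
    (hrs : B r s = -1) : False := by
  classical
  obtain ⟨t, ⟨ht, htt⟩, htrs⟩ := exists_notMem_of_span_eq_top hroots
    (Submodule.span_finset_ne_top {r, s} ((Finset.card_le_two).trans_lt (by omega)))
  rw [Finset.coe_pair] at htrs
  have hpairing : ∀ w ∈ Submodule.span ℚ {r, s}, w ∈ L → B w w = 2 →
      B w t = -1 ∨ B w t = 0 ∨ B w t = 1 := fun w hw hwL hww =>
    apply_root_eq_neg_one_or_zero_or_one hsymm hpos hww htt
      (fun h => htrs ((Submodule.span_singleton_le_iff_mem _ _).2 hw h)) (hL.integral w hwL t ht)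
  have hsr : B s r = -1 := (hsymm s r).trans hrs
  have hr' : r ∈ Submodule.span ℚ {r, s} := Submodule.subset_span (by simp)
  have hs' : s ∈ Submodule.span ℚ {r, s} := Submodule.subset_span (by simp)
  have hsum := hpairing (r + s) (add_mem hr' hs') (add_mem hr hs)
    (by simp [hrr, hss, hrs, hsr]; norm_num)
  rw [map_add, LinearMap.add_apply] at hsum
  have hw : -(r + s) ∈ L := neg_mem (add_mem hr hs)
  have hww : B (-(r + s)) (-(r + s)) = 2 := by simp [hrr, hss, hrs, hsr]; norm_num
  have htt' : B (-t) (-t) = 2 := by simp [htt]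
  -- `B (r + s) t ∈ {-1, 0, 1}` excludes the patterns `(±1, ±1)`
  rcases hpairing r hr' hr hrr with ha | ha | ha <;>
    rcases hpairing s hs' hs hss with hb | hb | hb <;> rw [ha, hb] at hsum
  · norm_num at hsum
  · exact false_of_a3 hsymm hpos hdim hL hdisc hs hr ht hss hrr htt hsr ha hb
  · exact false_of_a3 hsymm hpos hdim hL hdisc hw hr ht hww hrr htt
      (by simp [hrr, hsr]; norm_num) ha (by simp [ha, hb])
  · exact false_of_a3 hsymm hpos hdim hL hdisc hr hs ht hrr hss htt hrs hb ha
  · exact false_of_a2a1 hsymm hpos hdim hL hdisc hr hs ht hrr hss htt hrs ha hb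
  · exact false_of_a3 hsymm hpos hdim hL hdisc hr hs (neg_mem ht) hrr hss htt' hrs
      (by simp [hb]) (by simp [ha])
  · exact false_of_a3 hsymm hpos hdim hL hdisc hw hs ht hww hss htt
      (by simp [hss, hrs]; norm_num) hb (by simp [ha, hb])
  · exact false_of_a3 hsymm hpos hdim hL hdisc hs hr (neg_mem ht) hss hrr htt' hsr
      (by simp [ha]) (by simp [hb])
  · norm_num at hsum

theorem apply_eq_zero_of_notMem_span_singleton (hsymm : ∀ x y : V, B x y = B y x)
    (hpos : ∀ v : V, v ≠ 0 → 0 < B v v) (hdim : Module.finrank ℚ V = 3)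
    (hL : IsEvenLattice B L) (hdisc : ∀ x : V, (∀ y ∈ L, ∃ n : ℤ, B x y = n) → (2 : ℚ) • x ∈ L)
    (hroots : Submodule.span ℚ {r : V | r ∈ L ∧ B r r = 2} = ⊤)
    {r s : V} (hr : r ∈ L) (hs : s ∈ L) (hrr : B r r = 2) (hss : B s s = 2)
    (hrs : s ∉ ℚ ∙ r) : B r s = 0 := by
  rcases apply_root_eq_neg_one_or_zero_or_one hsymm hpos hrr hss hrs (hL.integral r hr s hs)
    with h | h | h
  · exact (false_of_a2 hsymm hpos hdim hL hdisc hroots hr hs hrr hss h).elim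
  · exact h
  · exact (false_of_a2 hsymm hpos hdim hL hdisc hroots hr (neg_mem hs) hrr (by simp [hss])
      (by simp [h])).elim

theorem eq_span_of_orthogonal_roots (hsymm : ∀ x y : V, B x y = B y x)
    (hpos : ∀ v : V, v ≠ 0 → 0 < B v v) (hdim : Module.finrank ℚ V = 3)
    (hL : IsEvenLattice B L) {r₁ r₂ r₃ : V} (h₁ : r₁ ∈ L) (h₂ : r₂ ∈ L) (h₃ : r₃ ∈ L)
    (h₁₁ : B r₁ r₁ = 2) (h₂₂ : B r₂ r₂ = 2) (h₃₃ : B r₃ r₃ = 2)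
    (h₁₂ : B r₁ r₂ = 0) (h₁₃ : B r₁ r₃ = 0) (h₂₃ : B r₂ r₃ = 0) :
    L = Submodule.span ℤ {r₁, r₂, r₃} := by
  have h₂₁ : B r₂ r₁ = 0 := (hsymm r₂ r₁).trans h₁₂
  have h₃₁ : B r₃ r₁ = 0 := (hsymm r₃ r₁).trans h₁₃
  have h₃₂ : B r₃ r₂ = 0 := (hsymm r₃ r₂).trans h₂₃
  have hspan : Submodule.span ℚ (Set.range ![r₁, r₂, r₃]) = ⊤ :=
    span_range_eq_top_of_det_ne_zero B (by simp [hdim])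
      (by simp [Matrix.det_fin_three, h₁₁, h₂₂, h₃₃, h₁₂, h₂₁, h₁₃, h₃₁, h₂₃, h₃₂])
  refine le_antisymm (fun y hy => ?_) (Submodule.span_le.2 (by simp [Set.insert_subset_iff, *]))
  obtain ⟨a, ha⟩ := hL.integral r₁ h₁ y hy
  obtain ⟨c, hc⟩ := hL.integral r₂ h₂ y hy
  obtain ⟨d, hd⟩ := hL.integral r₃ h₃ y hy
  obtain ⟨n, hn⟩ := hL.even y hy
  have hexp : y = (B r₁ y / 2) • r₁ + (B r₂ y / 2) • r₂ + (B r₃ y / 2) • r₃ := by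
    refine eq_of_forall_apply_eq_of_span_eq_top hpos hspan fun i => ?_
    fin_cases i <;> simp [h₁₁, h₂₂, h₃₃, h₁₂, h₂₁, h₁₃, h₃₁, h₂₃, h₃₂]
  have hnorm := congrArg (B y) hexp
  simp only [map_add, map_smul, smul_eq_mul, hsymm y r₁, hsymm y r₂, hsymm y r₃, ha, hc, hd,
    hn] at hnorm
  have h4 : ((a ^ 2 + c ^ 2 + d ^ 2 : ℤ) : ℚ) = (4 * n : ℤ) := by
    push_cast
    linear_combination -2 * hnorm
  obtain ⟨⟨a', rfl⟩, ⟨c', rfl⟩, ⟨d', rfl⟩⟩ :=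
    Int.two_dvd_of_four_dvd_sq_add_sq_add_sq a c d ⟨n, by exact_mod_cast h4⟩
  rw [hexp, ha, hc, hd]
  push_cast
  simp only [mul_div_cancel_left₀ _ (two_ne_zero' ℚ), Int.cast_smul_eq_zsmul]
  exact add_mem (add_mem (Submodule.smul_mem _ _ (Submodule.subset_span (by simp)))
    (Submodule.smul_mem _ _ (Submodule.subset_span (by simp))))
    (Submodule.smul_mem _ _ (Submodule.subset_span (by simp)))

end IsEvenLattice

end Lattice

theorem rank_three_even_lattice_with_two_elementary_discriminant_general
    {V : Type*} [AddCommGroup V] [Module ℚ V]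
    (hdim : Module.finrank ℚ V = 3)
    (B : LinearMap.BilinForm ℚ V)
    (hsymm : ∀ x y : V, B x y = B y x)
    (hpos : ∀ v : V, v ≠ 0 → 0 < B v v)
    (L : Submodule ℤ V)
    (hint : ∀ x ∈ L, ∀ y ∈ L, ∃ n : ℤ, B x y = n)
    (heven : ∀ x ∈ L, ∃ n : ℤ, B x x = 2 * n)
    (hdisc : ∀ x : V, (∀ y ∈ L, ∃ n : ℤ, B x y = n) → (2 : ℚ) • x ∈ L)
    (hroots : Submodule.span ℚ {r : V | r ∈ L ∧ B r r = 2} = ⊤) :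
    ∃ r₁ r₂ r₃ : V,
      r₁ ∈ L ∧ r₂ ∈ L ∧ r₃ ∈ L ∧
      B r₁ r₁ = 2 ∧ B r₂ r₂ = 2 ∧ B r₃ r₃ = 2 ∧
      B r₁ r₂ = 0 ∧ B r₁ r₃ = 0 ∧ B r₂ r₃ = 0 ∧
      L = Submodule.span ℤ {r₁, r₂, r₃} := by
  classical
  have hL : IsEvenLattice B L := ⟨hint, heven⟩
  have hsmall (s : Finset V) (hs : s.card ≤ 2) : Submodule.span ℚ (s : Set V) ≠ ⊤ :=
    Submodule.span_finset_ne_top s (by omega)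
  obtain ⟨r₁, ⟨h₁, h₁₁⟩, -⟩ := exists_notMem_of_span_eq_top hroots (hsmall ∅ (by simp))
  obtain ⟨r₂, ⟨h₂, h₂₂⟩, h₂₁⟩ := exists_notMem_of_span_eq_top hroots (hsmall {r₁} (by simp))
  obtain ⟨r₃, ⟨h₃, h₃₃⟩, h₃₁₂⟩ :=
    exists_notMem_of_span_eq_top hroots (hsmall {r₁, r₂} Finset.card_le_two)
  rw [Finset.coe_singleton] at h₂₁
  rw [Finset.coe_pair] at h₃₁₂
  have horth {r s : V} (hr : r ∈ L) (hs : s ∈ L) (hrr : B r r = 2) (hss : B s s = 2)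
      (hrs : s ∉ ℚ ∙ r) : B r s = 0 :=
    hL.apply_eq_zero_of_notMem_span_singleton hsymm hpos hdim hdisc hroots hr hs hrr hss hrs
  have h₁₂ := horth h₁ h₂ h₁₁ h₂₂ h₂₁
  have h₁₃ := horth h₁ h₃ h₁₁ h₃₃ fun h => h₃₁₂ (Submodule.span_mono (by simp) h)
  have h₂₃ := horth h₂ h₃ h₂₂ h₃₃ fun h => h₃₁₂ (Submodule.span_mono (by simp) h)
  exact ⟨r₁, r₂, r₃, h₁, h₂, h₃, h₁₁, h₂₂, h₃₃, h₁₂, h₁₃, h₂₃,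
    hL.eq_span_of_orthogonal_roots hsymm hpos hdim h₁ h₂ h₃ h₁₁ h₂₂ h₃₃ h₁₂ h₁₃ h₂₃⟩

/-- An even integral lattice of rank 3 with elementary abelian 2-group
discriminant whose roots span must have root system of type `A₁³`: it is the
orthogonal direct sum of three rank-1 lattices spanned by pairwise orthogonal
roots. -/
theorem rank_three_even_lattice_with_two_elementary_discriminant
    {V : Type*} [AddCommGroup V] [Module ℚ V]
    (hdim : Module.finrank ℚ V = 3)
    (B : LinearMap.BilinForm ℚ V)
    (hsymm : ∀ x y : V, B x y = B y x)
    (hpos : ∀ v : V, v ≠ 0 → 0 < B v v)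
    (L : Submodule ℤ V) (hfg : L.FG)
    (hspan : Submodule.span ℚ (L : Set V) = ⊤)
    (hint : ∀ x ∈ L, ∀ y ∈ L, ∃ n : ℤ, B x y = n)
    (heven : ∀ x ∈ L, ∃ n : ℤ, B x x = 2 * n)
    (hdisc : ∀ x : V, (∀ y ∈ L, ∃ n : ℤ, B x y = n) → (2 : ℚ) • x ∈ L)
    (hroots : Submodule.span ℚ {r : V | r ∈ L ∧ B r r = 2} = ⊤) :
    ∃ r₁ r₂ r₃ : V,
      r₁ ∈ L ∧ r₂ ∈ L ∧ r₃ ∈ L ∧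
      B r₁ r₁ = 2 ∧ B r₂ r₂ = 2 ∧ B r₃ r₃ = 2 ∧
      B r₁ r₂ = 0 ∧ B r₁ r₃ = 0 ∧ B r₂ r₃ = 0 ∧
      L = Submodule.span ℤ {r₁, r₂, r₃} :=
  rank_three_even_lattice_with_two_elementary_discriminant_general hdim B hsymm hpos L hint heven
    hdisc hroots
end

section
/- Let d ≥ 3 and let B ⊆ F₂^d be a nonaffine midset of defect 1, i.e., B = A₀ + H₀ is the symmetric difference of an affine codimension-2 subspace A₀ and an affine hyperplane H₀ with |B| = 2^{d-1}. Suppose A is an affine codimension-2 subspace contained in B. Then among the three affine hyperplanes containing A, exactly one hyperplane H satisfies B ∩ H = A. -/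
open Module Set

def mS (a b c : ZMod 2) (y : (Fin 3 → ZMod 2)) : Prop :=
  ((y 1 = b ∧ y 2 = c) ∧ ¬ (y 0 = a)) ∨ ((y 0 = a) ∧ ¬(y 1 = b ∧ y 2 = c))

instance (a b c : ZMod 2) (y : (Fin 3 → ZMod 2)) : Decidable (mS a b c y) := by unfold mS; infer_instance

set_option synthInstance.maxSize 2000 in
set_option synthInstance.maxHeartbeats 1000000 in
set_option maxRecDepth 100000 in
set_option maxHeartbeats 4000000 in
lemma decNoPlane : ∀ (a b c : ZMod 2) (u z w : (Fin 3 → ZMod 2)), z ≠ 0 → w ≠ 0 → z ≠ w →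
    mS a b c u → mS a b c (u+z) → mS a b c (u+w) → mS a b c (u+(z+w)) → False := by decide

set_option synthInstance.maxSize 2000 in
set_option synthInstance.maxHeartbeats 1000000 in
set_option maxRecDepth 100000 in
set_option maxHeartbeats 4000000 in
lemma decEx : ∀ (a b c : ZMod 2) (u z : (Fin 3 → ZMod 2)), z ≠ 0 → mS a b c u → mS a b c (u+z) →
    ∃ w, w ≠ 0 ∧ w ≠ z ∧ ∀ y, (mS a b c y ∧ (y = u ∨ y = u+z ∨ y = u+w ∨ y = u+(z+w)))
      ↔ (y = u ∨ y = u+z) := by decide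

set_option synthInstance.maxSize 2000 in
set_option synthInstance.maxHeartbeats 1000000 in
set_option maxRecDepth 100000 in
set_option maxHeartbeats 16000000 in
lemma decUniq : ∀ (a b c : ZMod 2) (u z w w' : (Fin 3 → ZMod 2)), z ≠ 0 → w ≠ 0 → w ≠ z → w' ≠ 0 → w' ≠ z →
    (∀ y, (mS a b c y ∧ (y = u ∨ y = u+z ∨ y = u+w ∨ y = u+(z+w))) ↔ (y = u ∨ y = u+z)) →
    (∀ y, (mS a b c y ∧ (y = u ∨ y = u+z ∨ y = u+w' ∨ y = u+(z+w'))) ↔ (y = u ∨ y = u+z)) →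
    ∀ y, (y = u ∨ y = u+z ∨ y = u+w ∨ y = u+(z+w))
      ↔ (y = u ∨ y = u+z ∨ y = u+w' ∨ y = u+(z+w')) := by
  decide

lemma zmod2_neg : ∀ s : ZMod 2, -s = s := by decide

lemma zmod2_cases : ∀ s : ZMod 2, s = 0 ∨ s = 1 := by decide

lemma card_submodule {n : ℕ} (U : Submodule (ZMod 2) (Fin n → ZMod 2)) :
    Nat.card U = 2 ^ Module.finrank (ZMod 2) U := by
  have : Fintype U := Fintype.ofFinite _
  rw [Nat.card_eq_fintype_card, card_eq_pow_finrank (K := ZMod 2) (V := U), ZMod.card 2]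

lemma ncard_submodule {n : ℕ} (U : Submodule (ZMod 2) (Fin n → ZMod 2)) :
    (U : Set (Fin n → ZMod 2)).ncard = 2 ^ Module.finrank (ZMod 2) U := by
  rw [← card_submodule U, ← Nat.card_coe_set_eq, SetLike.coe_sort_coe]

lemma ncard_coset {n : ℕ} (U : Submodule (ZMod 2) (Fin n → ZMod 2)) (p : Fin n → ZMod 2) :
    ({x | x - p ∈ U} : Set (Fin n → ZMod 2)).ncard = 2 ^ Module.finrank (ZMod 2) U := by
  have h : ({x | x - p ∈ U} : Set (Fin n → ZMod 2)) = (fun u => u + p) '' (U : Set _) := by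
    ext x
    simp only [Set.mem_setOf_eq, Set.mem_image, SetLike.mem_coe]
    constructor
    · intro hx; exact ⟨x - p, hx, by abel⟩
    · rintro ⟨u, hu, rfl⟩; simpa using hu
  rw [h, Set.ncard_image_of_injective _ (add_left_injective p), ncard_submodule]

set_option synthInstance.maxHeartbeats 1000000 in
lemma finrank_map_add {n m : ℕ} (f : (Fin n → ZMod 2) →ₗ[ZMod 2] (Fin m → ZMod 2))
    (U : Submodule (ZMod 2) (Fin n → ZMod 2)) :
    Module.finrank (ZMod 2) (U.map f) + Module.finrank (ZMod 2) ↥(U ⊓ LinearMap.ker f)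
      = Module.finrank (ZMod 2) U := by
  have h := LinearMap.finrank_range_add_finrank_ker (f.domRestrict U)
  rw [LinearMap.range_domRestrict, LinearMap.ker_domRestrict] at h
  have h2 : Submodule.comap U.subtype (LinearMap.ker f)
      = Submodule.comap U.subtype (U ⊓ LinearMap.ker f) := by
    rw [Submodule.comap_inf, Submodule.comap_subtype_self, top_inf_eq]
  have h3 : Module.finrank (ZMod 2)
      ↥(Submodule.comap U.subtype (U ⊓ LinearMap.ker f))
      = Module.finrank (ZMod 2) ↥(U ⊓ LinearMap.ker f) :=
    (Submodule.comapSubtypeEquivOfLe (inf_le_left : U ⊓ LinearMap.ker f ≤ U)).finrank_eq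
  rw [h2, h3] at h
  exact h

/-- extract a second generator from a 2-dimensional subspace of `F₂³`. -/
lemma extract_dim2 (D : Submodule (ZMod 2) (Fin 3 → ZMod 2)) (hfr : Module.finrank (ZMod 2) D = 2)
    (z : (Fin 3 → ZMod 2)) (hz : z ∈ D) (hz0 : z ≠ 0) :
    ∃ w ∈ D, w ≠ 0 ∧ w ≠ z ∧ (D : Set (Fin 3 → ZMod 2)) = {0, z, w, z + w} := by
  have h4 : (D : Set (Fin 3 → ZMod 2)).ncard = 4 := by rw [ncard_submodule, hfr]; norm_num
  have hns : ¬ (D : Set (Fin 3 → ZMod 2)) ⊆ {0, z} := by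
    intro hsub
    have h1 := Set.ncard_le_ncard hsub (Set.toFinite _)
    rw [h4, Set.ncard_pair (Ne.symm hz0)] at h1
    omega
  obtain ⟨w, hwD, hw⟩ := Set.not_subset.mp hns
  simp only [Set.mem_insert_iff, Set.mem_singleton_iff, not_or] at hw
  obtain ⟨hw0, hwz⟩ := hw
  refine ⟨w, hwD, hw0, hwz, ?_⟩
  have hzw0 : z + w ≠ 0 := by
    intro h
    apply hwz
    have : w = -z := by linear_combination h
    rw [this]; funext i; exact zmod2_neg (z i)
  have hzwz : z + w ≠ z := by intro h; apply hw0; simpa using h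
  have hzww : z + w ≠ w := by intro h; apply hz0; simpa using h
  have hsub : ({0, z, w, z + w} : Set (Fin 3 → ZMod 2)) ⊆ (D : Set (Fin 3 → ZMod 2)) := by
    intro y hy
    simp only [Set.mem_insert_iff, Set.mem_singleton_iff] at hy
    rcases hy with rfl | rfl | rfl | rfl
    · exact D.zero_mem
    · exact hz
    · exact hwD
    · exact D.add_mem hz hwD
  have hcard : ({0, z, w, z + w} : Set (Fin 3 → ZMod 2)).ncard = 4 := by
    rw [Set.ncard_insert_of_notMem (by
        simp only [Set.mem_insert_iff, Set.mem_singleton_iff, not_or]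
        exact ⟨Ne.symm hz0, Ne.symm hw0, Ne.symm hzw0⟩),
      Set.ncard_insert_of_notMem (by
        simp only [Set.mem_insert_iff, Set.mem_singleton_iff, not_or]
        exact ⟨fun h => hwz h.symm, fun h => hzwz h.symm⟩),
      Set.ncard_pair (Ne.symm hzww)]
  exact (Set.eq_of_subset_of_ncard_le hsub (by rw [h4, hcard]) (Set.toFinite _)).symm

lemma fr_congr {n : ℕ} {U U' : Submodule (ZMod 2) (Fin n → ZMod 2)} (h : U = U') :
    Module.finrank (ZMod 2) U = Module.finrank (ZMod 2) U' := by rw [h]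

set_option maxHeartbeats 1000000 in
/-- Let `B` be a nonaffine midset of defect 1 in `F₂^d`, `d ≥ 3` (the
symmetric difference of an affine codimension-2 subspace and an affine
hyperplane, of size `2^(d-1)` and not itself a hyperplane).  If `A` is an
affine codimension-2 subspace contained in `B`, then there is a unique affine
hyperplane `H` with `B ∩ H = A`. -/
theorem unique_hyperplane_meeting_midset_in_codim_two
    (d : ℕ) (hd : 3 ≤ d)
    (A₀ H₀ B : Set (Fin d → ZMod 2))
    (hA₀ : IsAffineSubspaceOfDim d (d - 2) A₀)
    (hH₀ : IsAffineSubspaceOfDim d (d - 1) H₀)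
    (hB : B = symmDiff A₀ H₀)
    (hmid : B.ncard = 2 ^ (d - 1))
    (hnonaff : ¬ IsAffineSubspaceOfDim d (d - 1) B)
    (A : Set (Fin d → ZMod 2))
    (hA : IsAffineSubspaceOfDim d (d - 2) A)
    (hAB : A ⊆ B) :
    ∃! H : Set (Fin d → ZMod 2),
      IsAffineSubspaceOfDim d (d - 1) H ∧ B ∩ H = A := by
  classical
  obtain ⟨p₀, W₀, hW₀, hA₀eq⟩ := hA₀
  obtain ⟨q₀, V₀, hV₀, hH₀eq⟩ := hH₀
  obtain ⟨p, W, hWrank, hAeq⟩ := hA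
  have hMfr : Module.finrank (ZMod 2) (Fin d → ZMod 2) = d := by
    simp [Module.finrank_pi]
  have hpow2 : (0:ℕ) < 2 ^ (d-2) := pow_pos (by norm_num) _
  have hpow : 2 ^ (d-1) = 2 * 2 ^ (d-2) := by
    have h1 : d - 1 = (d-2) + 1 := by omega
    rw [h1, pow_succ]; ring
  have hpA : ∀ ω ∈ W, p + ω ∈ A := by
    intro ω hω
    rw [hAeq]
    simp only [Set.mem_setOf_eq, add_sub_cancel_left]
    exact hω
  have hpAmem : p ∈ A := by
    rw [hAeq]; simp only [Set.mem_setOf_eq, sub_self]; exact W.zero_mem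
  by_cases hWV : W₀ ≤ V₀
  · exfalso
    have hcA : A₀.ncard = 2 ^ (d-2) := by rw [hA₀eq, ncard_coset, hW₀]
    have hcH : H₀.ncard = 2 ^ (d-1) := by rw [hH₀eq, ncard_coset, hV₀]
    by_cases hpq : p₀ - q₀ ∈ V₀
    · have hsub : A₀ ⊆ H₀ := by
        intro x hx
        rw [hA₀eq] at hx
        rw [hH₀eq]
        simp only [Set.mem_setOf_eq] at hx ⊢
        have hx2 : x - q₀ = (x - p₀) + (p₀ - q₀) := by abel
        rw [hx2]
        exact V₀.add_mem (hWV hx) hpq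
      have hBd : B = H₀ \ A₀ := by rw [hB]; exact symmDiff_of_le hsub
      rw [hBd, Set.ncard_diff hsub, hcA, hcH] at hmid
      omega
    · have hdisj : Disjoint A₀ H₀ := by
        rw [Set.disjoint_left]
        intro x hx hx'
        rw [hA₀eq] at hx; rw [hH₀eq] at hx'
        simp only [Set.mem_setOf_eq] at hx hx'
        apply hpq
        have h3 : p₀ - q₀ = (x - q₀) - (x - p₀) := by abel
        rw [h3]
        exact V₀.sub_mem hx' (hWV hx)
      have hBd : B = A₀ ∪ H₀ := by rw [hB]; exact hdisj.symmDiff_eq_sup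
      rw [hBd, Set.ncard_union_eq hdisj, hcA, hcH] at hmid
      omega
  have hfrK : Module.finrank (ZMod 2) ↥(V₀ ⊓ W₀) = d - 3 := by
    have hsup := Submodule.finrank_sup_add_finrank_inf_eq V₀ W₀
    have hlt : V₀ < V₀ ⊔ W₀ := lt_of_le_of_ne le_sup_left (fun h => hWV (h ▸ le_sup_right))
    have h1 := Submodule.finrank_lt_finrank_of_lt hlt
    have h2 := Submodule.finrank_le (V₀ ⊔ W₀)
    rw [hMfr] at h2
    rw [hV₀, hW₀] at hsup
    rw [hV₀] at h1
    omega
  -- functionals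
  have hQ1 : Module.finrank (ZMod 2) ((Fin d → ZMod 2) ⧸ V₀) = 1 := by
    have h := Submodule.finrank_quotient_add_finrank V₀
    rw [hMfr, hV₀] at h; omega
  set e1 := (Module.finBasisOfFinrankEq (ZMod 2) _ hQ1).equivFun with he1
  set φ : (Fin d → ZMod 2) →ₗ[ZMod 2] ZMod 2 :=
    (LinearMap.proj 0).comp (e1.toLinearMap.comp V₀.mkQ) with hφdef
  have hφ : ∀ x, φ x = 0 ↔ x ∈ V₀ := by
    intro x
    have h1 : φ x = e1 (Submodule.Quotient.mk x) 0 := by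
      simp [hφdef, Submodule.mkQ_apply]
    rw [h1]
    constructor
    · intro h
      have h2 : e1 (Submodule.Quotient.mk x) = 0 := by
        funext i
        have hi : i = 0 := Subsingleton.elim i 0
        rw [hi]
        simpa using h
      have h3 : (Submodule.Quotient.mk x : _ ⧸ V₀) = 0 := by
        apply e1.injective; rw [h2]; simp
      exact (Submodule.Quotient.mk_eq_zero V₀).mp h3
    · intro h
      have h3 : (Submodule.Quotient.mk x : _ ⧸ V₀) = 0 := (Submodule.Quotient.mk_eq_zero V₀).mpr h
      rw [h3]; simp
  have hQ2 : Module.finrank (ZMod 2) ((Fin d → ZMod 2) ⧸ W₀) = 2 := by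
    have h := Submodule.finrank_quotient_add_finrank W₀
    rw [hMfr, hW₀] at h; omega
  set e2 := (Module.finBasisOfFinrankEq (ZMod 2) _ hQ2).equivFun with he2
  set α : (Fin d → ZMod 2) →ₗ[ZMod 2] ZMod 2 :=
    (LinearMap.proj 0).comp (e2.toLinearMap.comp W₀.mkQ) with hαdef
  set β : (Fin d → ZMod 2) →ₗ[ZMod 2] ZMod 2 :=
    (LinearMap.proj 1).comp (e2.toLinearMap.comp W₀.mkQ) with hβdef
  have hαβ : ∀ x, (α x = 0 ∧ β x = 0) ↔ x ∈ W₀ := by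
    intro x
    have h1 : α x = e2 (Submodule.Quotient.mk x) 0 := by simp [hαdef, Submodule.mkQ_apply]
    have h2 : β x = e2 (Submodule.Quotient.mk x) 1 := by simp [hβdef, Submodule.mkQ_apply]
    rw [h1, h2]
    constructor
    · rintro ⟨ha, hb⟩
      have h3 : e2 (Submodule.Quotient.mk x) = 0 := by
        funext i
        fin_cases i
        · simpa using ha
        · simpa using hb
      have h4 : (Submodule.Quotient.mk x : _ ⧸ W₀) = 0 := by
        apply e2.injective; rw [h3]; simp
      exact (Submodule.Quotient.mk_eq_zero W₀).mp h4
    · intro h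
      have h4 : (Submodule.Quotient.mk x : _ ⧸ W₀) = 0 := (Submodule.Quotient.mk_eq_zero W₀).mpr h
      rw [h4]; simp
  set π : (Fin d → ZMod 2) →ₗ[ZMod 2] (Fin 3 → ZMod 2) := LinearMap.pi (fun i => ![φ, α, β] i) with hπdef
  have hπ0 : ∀ x, π x 0 = φ x := fun x => rfl
  have hπ1 : ∀ x, π x 1 = α x := fun x => rfl
  have hπ2 : ∀ x, π x 2 = β x := fun x => rfl
  have hkerπ : LinearMap.ker π = V₀ ⊓ W₀ := by
    ext x
    simp only [LinearMap.mem_ker, Submodule.mem_inf]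
    constructor
    · intro h
      refine ⟨(hφ x).mp ?_, (hαβ x).mp ⟨?_, ?_⟩⟩
      · rw [← hπ0 x, h]; rfl
      · rw [← hπ1 x, h]; rfl
      · rw [← hπ2 x, h]; rfl
    · rintro ⟨h1, h2⟩
      obtain ⟨ha, hb⟩ := (hαβ x).mpr h2
      have hf := (hφ x).mpr h1
      funext i
      fin_cases i
      · exact hf
      · exact ha
      · exact hb
  have hF3fr : Module.finrank (ZMod 2) (Fin 3 → ZMod 2) = 3 := by simp [Module.finrank_pi]
  have hrange : LinearMap.range π = ⊤ := by
    have h := LinearMap.finrank_range_add_finrank_ker π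
    have e : Module.finrank (ZMod 2) ↥(LinearMap.ker π) = d - 3 := by
      rw [fr_congr hkerπ]; exact hfrK
    rw [hMfr] at h
    apply Submodule.eq_top_of_finrank_eq
    rw [hF3fr]
    omega
  have hπsurj : Function.Surjective π := LinearMap.range_eq_top.mp hrange
  set a := φ q₀ with ha
  set b := α p₀ with hb
  set c := β p₀ with hc
  have hH₀mem : ∀ x, x ∈ H₀ ↔ π x 0 = a := by
    intro x
    rw [hH₀eq]
    simp only [Set.mem_setOf_eq]
    rw [← hφ (x - q₀), map_sub, sub_eq_zero, ← hπ0 x]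
  have hA₀mem : ∀ x, x ∈ A₀ ↔ (π x 1 = b ∧ π x 2 = c) := by
    intro x
    rw [hA₀eq]
    simp only [Set.mem_setOf_eq]
    rw [← hαβ (x - p₀), map_sub, map_sub, sub_eq_zero, sub_eq_zero, ← hπ1 x, ← hπ2 x]
  have hBmem : ∀ x, x ∈ B ↔ mS a b c (π x) := by
    intro x
    rw [hB, Set.mem_symmDiff]
    unfold mS
    rw [hA₀mem x, hH₀mem x]
  -- K ≤ W
  have hKW : V₀ ⊓ W₀ ≤ W := by
    by_contra hKW
    obtain ⟨k, hkK, hkW⟩ := SetLike.not_le_iff_exists.mp hKW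
    have hTlt : W ⊓ (V₀ ⊓ W₀) < V₀ ⊓ W₀ :=
      lt_of_le_of_ne inf_le_right (fun h => hkW ((Submodule.mem_inf.mp (h.symm ▸ hkK)).1))
    have hT := Submodule.finrank_lt_finrank_of_lt hTlt
    rw [hfrK] at hT
    have hfrmap := finrank_map_add π W
    have e1 : Module.finrank (ZMod 2) ↥(W ⊓ LinearMap.ker π)
        = Module.finrank (ZMod 2) ↥(W ⊓ (V₀ ⊓ W₀)) := fr_congr (by rw [hkerπ])
    rw [hWrank] at hfrmap
    have hge : 2 ≤ Module.finrank (ZMod 2) ↥(W.map π) := by omega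
    have hcard : 4 ≤ (↑(W.map π) : Set (Fin 3 → ZMod 2)).ncard := by
      rw [ncard_submodule]
      calc (4:ℕ) = 2^2 := by norm_num
      _ ≤ _ := Nat.pow_le_pow_right (by norm_num) hge
    have h1 : ¬ (↑(W.map π) : Set (Fin 3 → ZMod 2)) ⊆ {0} := by
      intro hsub
      have h2 := Set.ncard_le_ncard hsub (Set.toFinite _)
      rw [Set.ncard_singleton] at h2; omega
    obtain ⟨z, hzmem, hz0⟩ := Set.not_subset.mp h1
    rw [Set.mem_singleton_iff] at hz0
    have h2 : ¬ (↑(W.map π) : Set (Fin 3 → ZMod 2)) ⊆ {0, z} := by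
      intro hsub
      have h3 := Set.ncard_le_ncard hsub (Set.toFinite _)
      rw [Set.ncard_pair (Ne.symm hz0)] at h3; omega
    obtain ⟨w, hwmem, hw⟩ := Set.not_subset.mp h2
    simp only [Set.mem_insert_iff, Set.mem_singleton_iff, not_or] at hw
    obtain ⟨hw0, hwz⟩ := hw
    rw [SetLike.mem_coe] at hzmem hwmem
    obtain ⟨w₁, hw₁W, rfl⟩ := Submodule.mem_map.mp hzmem
    obtain ⟨w₂, hw₂W, rfl⟩ := Submodule.mem_map.mp hwmem
    have hmem : ∀ ω, ω ∈ W → mS a b c (π p + π ω) := by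
      intro ω hω
      have h4 := (hBmem (p + ω)).mp (hAB (hpA ω hω))
      rwa [map_add] at h4
    refine decNoPlane a b c (π p) (π w₁) (π w₂) hz0 hw0 (fun h => hwz h.symm)
      ?_ (hmem w₁ hw₁W) (hmem w₂ hw₂W) ?_
    · have h5 := hmem 0 W.zero_mem
      rwa [map_zero, add_zero] at h5
    · have h5 := hmem (w₁ + w₂) (W.add_mem hw₁W hw₂W)
      rwa [map_add] at h5
  -- direction of A in the quotient
  have hWK : ¬ W ≤ V₀ ⊓ W₀ := by
    intro hle
    have h := le_antisymm hle hKW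
    have e := fr_congr h
    rw [hWrank, hfrK] at e
    omega
  obtain ⟨w₁, hw₁W, hw₁K⟩ := SetLike.not_le_iff_exists.mp hWK
  obtain ⟨u, hu⟩ : ∃ u, u = π p := ⟨π p, rfl⟩
  obtain ⟨z, hz⟩ : ∃ z, z = π w₁ := ⟨π w₁, rfl⟩
  have hz0 : z ≠ 0 := by
    rw [hz]
    intro h
    exact hw₁K (hkerπ ▸ LinearMap.mem_ker.mpr h)
  have hfrmapW : Module.finrank (ZMod 2) ↥(W.map π) = 1 := by
    have hfrmap := finrank_map_add π W
    have e1 : Module.finrank (ZMod 2) ↥(W ⊓ LinearMap.ker π)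
        = Module.finrank (ZMod 2) ↥(V₀ ⊓ W₀) :=
      fr_congr (by rw [hkerπ]; exact inf_eq_right.mpr hKW)
    rw [hWrank] at hfrmap
    omega
  have hmapWset : (↑(W.map π) : Set (Fin 3 → ZMod 2)) = {0, z} := by
    have hsub : ({0, z} : Set (Fin 3 → ZMod 2)) ⊆ ↑(W.map π) := by
      intro y hy
      simp only [Set.mem_insert_iff, Set.mem_singleton_iff] at hy
      rcases hy with rfl | rfl
      · exact (W.map π).zero_mem
      · exact ⟨w₁, hw₁W, hz.symm⟩
    have hc1 : (↑(W.map π) : Set (Fin 3 → ZMod 2)).ncard = 2 := by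
      rw [ncard_submodule, hfrmapW]; norm_num
    have hc2 : ({0, z} : Set (Fin 3 → ZMod 2)).ncard = 2 := Set.ncard_pair (Ne.symm hz0)
    exact (Set.eq_of_subset_of_ncard_le hsub (by rw [hc1, hc2]) (Set.toFinite _)).symm
  have hAmem : ∀ x, x ∈ A ↔ (π x = u ∨ π x = u + z) := by
    intro x
    rw [hAeq]
    simp only [Set.mem_setOf_eq]
    constructor
    · intro hx
      have h1 : π (x - p) ∈ (↑(W.map π) : Set (Fin 3 → ZMod 2)) :=
        SetLike.mem_coe.mpr (Submodule.mem_map_of_mem hx)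
      rw [hmapWset] at h1
      simp only [Set.mem_insert_iff, Set.mem_singleton_iff, map_sub] at h1
      rcases h1 with h1 | h1
      · left
        have h2 : π x - u = 0 := by rw [hu]; exact h1
        exact sub_eq_zero.mp h2
      · right
        have h2 : π x - u = z := by rw [hu]; exact h1
        exact sub_eq_iff_eq_add'.mp h2
    · intro hx
      rcases hx with h1 | h1
      · have h2 : x - p ∈ LinearMap.ker π := by
          rw [LinearMap.mem_ker, map_sub, h1, hu, sub_self]
        rw [hkerπ] at h2
        exact hKW h2
      · have h2 : x - p - w₁ ∈ LinearMap.ker π := by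
          rw [LinearMap.mem_ker, map_sub, map_sub, h1, hu, hz]
          abel
        rw [hkerπ] at h2
        have h3 : x - p = (x - p - w₁) + w₁ := by abel
        rw [h3]
        exact W.add_mem (hKW h2) hw₁W
  have hu_mS : mS a b c u := by
    rw [hu]; exact (hBmem p).mp (hAB hpAmem)
  have huz_mS : mS a b c (u + z) := by
    rw [hu, hz]
    have h1 := (hBmem (p + w₁)).mp (hAB (hpA w₁ hw₁W))
    rwa [map_add] at h1
  obtain ⟨w, hw0, hwz, hSP⟩ := decEx a b c u z hz0 hu_mS huz_mS
  set Dsp := Submodule.span (ZMod 2) ({z, w} : Set (Fin 3 → ZMod 2)) with hDsp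
  have hDmem : ∀ y, y ∈ Dsp ↔ (y = 0 ∨ y = z ∨ y = w ∨ y = z + w) := by
    intro y
    rw [hDsp, Submodule.mem_span_pair]
    constructor
    · rintro ⟨s, t, rfl⟩
      rcases zmod2_cases s with rfl | rfl <;> rcases zmod2_cases t with rfl | rfl <;>
        simp
    · intro h
      rcases h with rfl | rfl | rfl | rfl
      · exact ⟨0, 0, by simp⟩
      · exact ⟨1, 0, by simp⟩
      · exact ⟨0, 1, by simp⟩
      · exact ⟨1, 1, by simp⟩
  have hDsetS : (↑Dsp : Set (Fin 3 → ZMod 2)) = {0, z, w, z + w} := by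
    ext y
    rw [SetLike.mem_coe, hDmem y]
    simp only [Set.mem_insert_iff, Set.mem_singleton_iff]
  have hfrD : Module.finrank (ZMod 2) ↥Dsp = 2 := by
    have hzw0 : z + w ≠ 0 := by
      intro h
      apply hwz
      have h1 : w = -z := by linear_combination h
      rw [h1]
      funext i
      exact zmod2_neg (z i)
    have hzwz : z + w ≠ z := fun h => hw0 (by simpa using h)
    have hzww : z + w ≠ w := fun h => hz0 (by simpa using h)
    have hcc : (↑Dsp : Set (Fin 3 → ZMod 2)).ncard = 4 := by
      rw [hDsetS]
      rw [Set.ncard_insert_of_notMem (by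
          simp only [Set.mem_insert_iff, Set.mem_singleton_iff, not_or]
          exact ⟨Ne.symm hz0, Ne.symm hw0, Ne.symm hzw0⟩),
        Set.ncard_insert_of_notMem (by
          simp only [Set.mem_insert_iff, Set.mem_singleton_iff, not_or]
          exact ⟨fun h => hwz h.symm, fun h => hzwz h.symm⟩),
        Set.ncard_pair (Ne.symm hzww)]
    rw [ncard_submodule] at hcc
    have h4 : (2:ℕ)^Module.finrank (ZMod 2) ↥Dsp = 2^2 := by rw [hcc]; norm_num
    exact Nat.pow_right_injective (le_refl 2) h4
  set V := Dsp.comap π with hV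
  have hkerleV : LinearMap.ker π ≤ V := by
    intro x hx
    rw [hV, Submodule.mem_comap, LinearMap.mem_ker.mp hx]
    exact Dsp.zero_mem
  have hfrV : Module.finrank (ZMod 2) ↥V = d - 1 := by
    have hfrmap := finrank_map_add π V
    have e1 : Module.finrank (ZMod 2) ↥(V.map π) = Module.finrank (ZMod 2) ↥Dsp :=
      fr_congr (by rw [hV, Submodule.map_comap_eq, hrange, top_inf_eq])
    have e2 : Module.finrank (ZMod 2) ↥(V ⊓ LinearMap.ker π)
        = Module.finrank (ZMod 2) ↥(V₀ ⊓ W₀) :=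
      fr_congr ((inf_eq_right.mpr hkerleV).trans hkerπ)
    omega
  set Hs := {x : Fin d → ZMod 2 | x - p ∈ V} with hHs
  have hHmem : ∀ x, x ∈ Hs ↔ (π x = u ∨ π x = u + z ∨ π x = u + w ∨ π x = u + (z + w)) := by
    intro x
    have h0 : x ∈ Hs ↔ π x - u ∈ Dsp := by
      rw [hHs]
      simp only [Set.mem_setOf_eq]
      rw [hV, Submodule.mem_comap, map_sub, hu]
    rw [h0, hDmem (π x - u)]
    exact or_congr sub_eq_zero (or_congr sub_eq_iff_eq_add'
      (or_congr sub_eq_iff_eq_add' sub_eq_iff_eq_add'))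
  have hBH : B ∩ Hs = A := by
    ext x
    rw [Set.mem_inter_iff, hBmem x, hHmem x, hAmem x]
    exact hSP (π x)
  refine ⟨Hs, ⟨⟨p, V, hfrV, hHs⟩, hBH⟩, ?_⟩
  rintro H' ⟨⟨h', V', hfrV', rfl⟩, hBH'⟩
  have hpH' : p - h' ∈ V' := by
    have h1 : p ∈ B ∩ {x | x - h' ∈ V'} := by rw [hBH']; exact hpAmem
    exact h1.2
  have hWV' : W ≤ V' := by
    intro ω hω
    have h2 : p + ω ∈ B ∩ {x | x - h' ∈ V'} := by rw [hBH']; exact hpA ω hω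
    have h3 := h2.2
    simp only [Set.mem_setOf_eq] at h3
    have h4 : ω = (p + ω - h') - (p - h') := by abel
    rw [h4]
    exact V'.sub_mem h3 hpH'
  have hkerV' : LinearMap.ker π ≤ V' := by
    rw [hkerπ]; exact le_trans hKW hWV'
  have hfrmapV' : Module.finrank (ZMod 2) ↥(V'.map π) = 2 := by
    have hfrmap := finrank_map_add π V'
    have e1 : Module.finrank (ZMod 2) ↥(V' ⊓ LinearMap.ker π)
        = Module.finrank (ZMod 2) ↥(V₀ ⊓ W₀) :=
      fr_congr ((inf_eq_right.mpr hkerV').trans hkerπ)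
    rw [hfrV'] at hfrmap
    omega
  have hzMem : z ∈ V'.map π := ⟨w₁, hWV' hw₁W, hz.symm⟩
  obtain ⟨w'', hw''mem, hw''0, hw''z, hmapV'set⟩ := extract_dim2 _ hfrmapV' z hzMem hz0
  have hH'mem : ∀ x, x ∈ {x | x - h' ∈ V'} ↔
      (π x = u ∨ π x = u + z ∨ π x = u + w'' ∨ π x = u + (z + w'')) := by
    intro x
    simp only [Set.mem_setOf_eq]
    have hiff : x - h' ∈ V' ↔ x - p ∈ V' := by
      constructor
      · intro h
        have h5 : x - p = (x - h') - (p - h') := by abel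
        rw [h5]; exact V'.sub_mem h hpH'
      · intro h
        have h5 : x - h' = (x - p) + (p - h') := by abel
        rw [h5]; exact V'.add_mem h hpH'
    rw [hiff]
    have hiff2 : x - p ∈ V' ↔ π (x - p) ∈ V'.map π := by
      constructor
      · exact fun h => Submodule.mem_map_of_mem h
      · intro h
        obtain ⟨v', hv', hveq⟩ := Submodule.mem_map.mp h
        have h5 : x - p - v' ∈ LinearMap.ker π := by
          rw [LinearMap.mem_ker, map_sub, hveq, sub_self]
        have h6 : x - p = (x - p - v') + v' := by abel
        rw [h6]
        exact V'.add_mem (hkerV' h5) hv'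
    rw [hiff2, ← SetLike.mem_coe, hmapV'set, map_sub, hu]
    simp only [Set.mem_insert_iff, Set.mem_singleton_iff]
    rw [← hu]
    exact or_congr sub_eq_zero (or_congr sub_eq_iff_eq_add'
      (or_congr sub_eq_iff_eq_add' sub_eq_iff_eq_add'))
  have hcond' : ∀ y, (mS a b c y ∧ (y = u ∨ y = u+z ∨ y = u+w'' ∨ y = u+(z+w'')))
      ↔ (y = u ∨ y = u+z) := by
    intro y
    obtain ⟨x, rfl⟩ := hπsurj y
    have h5 := Set.ext_iff.mp hBH' x
    rw [Set.mem_inter_iff, hBmem x, hH'mem x, hAmem x] at h5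
    exact h5
  have key := decUniq a b c u z w w'' hz0 hw0 hwz hw''0 hw''z hSP hcond'
  ext x
  rw [hH'mem x, hHmem x]
  exact (key (π x)).symm
end
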